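/- arXiv:math/0509296 — 6 statements merged into one kernel-verified Lean document; each statement's English description precedes it below -/
import Mathlib

section
/- If G is a finite connected simple graph that is not a path, then there exists an integer K such that for all k ≥ K the map γ_{L^k(G)} : Aut(L^k(G)) → Aut(L^{k+1}(G)) is a group isomorphism; in particular the sequence of automorphism groups Aut(L^k(G)) eventually stabilizes (all are isomorphic for k ≥ K). -/
/-!
Every automorphism of `L(H)` maps the star of edges at a vertex `v` to a clique of the same
size. A clique of edges with two or at least four members is a star (three pairwise meeting
edges may form a triangle instead), so if every degree of `H` is `2` or at least `4`, every
automorphism of `L(H)` is induced by a unique vertex map, and `γ_H` is bijective (Whitney).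
This degree condition passes from `H` to `L(H)`, as `L(H)` has degrees `deg u + deg v - 2`.

It is reached after finitely many steps: if `H` is connected and neither `2`-regular nor of
minimum degree at least `3` (in which case `L(H)` has minimum degree at least `4`), the
potential `∑ v, (3 - deg v)` strictly decreases from `H` to `L(H)`.
-/

open SimpleGraph

universe u

/-- The iterated line graph: `iterLineGraph G k` is `L^k(G)` together with its vertex type,
with `L^0(G) = G`. -/
def iterLineGraph {V : Type u} (G : SimpleGraph V) : ℕ → Σ W : Type u, SimpleGraph W
  | 0 => ⟨V, G⟩
  | k + 1 => ⟨(iterLineGraph G k).2.edgeSet, (iterLineGraph G k).2.lineGraph⟩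

/-- A vertex of `L^{k+1}(G)` is (definitionally) an edge of `L^k(G)`. -/
def iterVertexAsEdge {V : Type u} (G : SimpleGraph V) (k : ℕ)
    (x : (iterLineGraph G (k + 1)).1) : (iterLineGraph G k).2.edgeSet := x

open Set Function

theorem Sym2.eq_side_of_meets_sides {α : Type*} {x y z : α} {g : Sym2 α} (hg : ¬ g.IsDiag)
    (hxy : x ≠ y) (hxz : x ≠ z) (hyz : y ≠ z)
    (h₁ : ∃ w ∈ g, w ∈ s(x, y)) (h₂ : ∃ w ∈ g, w ∈ s(x, z)) (h₃ : ∃ w ∈ g, w ∈ s(y, z)) :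
    g = s(x, y) ∨ g = s(x, z) ∨ g = s(y, z) := by
  induction g with
  | _ p q =>
  simp only [Sym2.mk_isDiag_iff] at hg
  simp only [Sym2.mem_iff, Sym2.eq_iff] at *
  grind

namespace SimpleGraph

variable {W W' : Type*} {H : SimpleGraph W} {H' : SimpleGraph W'}

-- `Set.ncard`, so a vertex of infinite degree gets degree `0`.
noncomputable def ncardDegree (H : SimpleGraph W) (v : W) : ℕ := (H.neighborSet v).ncard

def incidentEdges (H : SimpleGraph W) (v : W) : Set H.edgeSet := {e | v ∈ (e : Sym2 W)}

@[simp]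
lemma mem_incidentEdges {v : W} {e : H.edgeSet} : e ∈ H.incidentEdges v ↔ v ∈ (e : Sym2 W) :=
  Iff.rfl

lemma ncard_incidentEdges (v : W) : (H.incidentEdges v).ncard = H.ncardDegree v := by
  classical
  exact Nat.card_congr <| (Equiv.subtypeSubtypeEquivSubtypeInter _ _).trans
    (H.incidenceSetEquivNeighborSet v)

lemma incidentEdges_inter_incidentEdges {u v : W} (h : H.Adj u v) :
    H.incidentEdges u ∩ H.incidentEdges v = {⟨s(u, v), h⟩} := by
  ext e
  simp only [mem_inter_iff, mem_incidentEdges, mem_singleton_iff, Subtype.ext_iff,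
    Sym2.mem_and_mem_iff h.ne]

lemma neighborSet_lineGraph_mk {u v : W} (h : H.Adj u v) :
    H.lineGraph.neighborSet ⟨s(u, v), h⟩ =
      (H.incidentEdges u ∪ H.incidentEdges v) \ {⟨s(u, v), h⟩} := by
  ext f
  simp only [mem_neighborSet, lineGraph_adj_iff_exists, Sym2.mem_iff, mem_sdiff, mem_union,
    mem_incidentEdges, mem_singleton_iff]
  grind

lemma ncardDegree_lineGraph_mk [Finite W] {u v : W} (h : H.Adj u v) :
    H.lineGraph.ncardDegree ⟨s(u, v), h⟩ + 2 = H.ncardDegree u + H.ncardDegree v := by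
  have hunion := ncard_union_add_ncard_inter (H.incidentEdges u) (H.incidentEdges v)
  rw [incidentEdges_inter_incidentEdges h, ncard_singleton, ncard_incidentEdges,
    ncard_incidentEdges] at hunion
  have hdiff := ncard_sdiff_singleton_add_one (a := (⟨s(u, v), h⟩ : H.edgeSet))
    (s := H.incidentEdges u ∪ H.incidentEdges v) (by simp)
  rw [ncardDegree, neighborSet_lineGraph_mk h]
  omega

lemma isClique_lineGraph_incidentEdges (v : W) : H.lineGraph.IsClique (H.incidentEdges v) :=
  fun _ he _ hf hne => lineGraph_adj_iff_exists.2 ⟨hne, v, he, hf⟩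

lemma exists_forall_mem_of_isClique_lineGraph {S : Set H.edgeSet}
    (hS : H.lineGraph.IsClique S) (hcard : S.ncard = 2 ∨ 4 ≤ S.ncard) :
    ∃ x, ∀ e ∈ S, x ∈ (e : Sym2 W) := by
  obtain ⟨a, ha, b, hb, hab⟩ := (one_lt_ncard (finite_of_ncard_pos (by omega))).1
    (by omega : 1 < S.ncard)
  obtain ⟨-, x, hxa, hxb⟩ := lineGraph_adj_iff_exists.1 (hS ha hb hab)
  refine ⟨x, fun e he => by_contra fun hxe => ?_⟩
  have hea : e ≠ a := by rintro rfl; exact hxe hxa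
  have heb : e ≠ b := by rintro rfl; exact hxe hxb
  rcases hcard with h2 | h4
  · obtain ⟨c, d, -, rfl⟩ := ncard_eq_two.1 h2
    grind
  -- `a`, `b`, `e` are the sides of a triangle `xyz`, and no fourth edge meets all three sides.
  obtain ⟨-, y, hye, hya⟩ := lineGraph_adj_iff_exists.1 (hS he ha hea)
  obtain ⟨-, z, hze, hzb⟩ := lineGraph_adj_iff_exists.1 (hS he hb heb)
  have hxy : x ≠ y := by rintro rfl; exact hxe hye
  have hxz : x ≠ z := by rintro rfl; exact hxe hze
  have ha' : (a : Sym2 W) = s(x, y) := (Sym2.mem_and_mem_iff hxy).1 ⟨hxa, hya⟩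
  have hb' : (b : Sym2 W) = s(x, z) := (Sym2.mem_and_mem_iff hxz).1 ⟨hxb, hzb⟩
  have hyz : y ≠ z := by rintro rfl; exact hab (Subtype.ext (ha'.trans hb'.symm))
  have he' : (e : Sym2 W) = s(y, z) := (Sym2.mem_and_mem_iff hyz).1 ⟨hye, hze⟩
  have hsub : S ⊆ {a, b, e} := by
    intro g hg
    by_contra hg'
    simp only [mem_insert_iff, mem_singleton_iff, not_or] at hg'
    have meets : ∀ f ∈ S, g ≠ f → ∃ w ∈ (g : Sym2 W), w ∈ (f : Sym2 W) := fun f hf hgf =>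
      let ⟨_, w, hw⟩ := lineGraph_adj_iff_exists.1 (hS hg hf hgf); ⟨w, hw⟩
    have := Sym2.eq_side_of_meets_sides (H.not_isDiag_of_mem_edgeSet g.2) hxy hxz hyz
      (ha' ▸ meets a ha hg'.1) (hb' ▸ meets b hb hg'.2.1) (he' ▸ meets e he hg'.2.2)
    rw [← ha', ← hb', ← he'] at this
    simp only [← Subtype.ext_iff] at this
    tauto
  have : S.ncard ≤ 3 := (ncard_le_ncard hsub).trans <|
    (ncard_insert_le _ _).trans (Nat.succ_le_succ ((ncard_insert_le _ _).trans (by simp)))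
  omega

-- The map `γ_H`.
def lineGraphAutHom (H : SimpleGraph W) : (H ≃g H) →* (H.lineGraph ≃g H.lineGraph) where
  toFun φ := φ.lineGraph
  map_one' := RelIso.ext fun e => Subtype.ext (congrFun Sym2.map_id (e : Sym2 W))
  map_mul' φ ψ := RelIso.ext fun _ => Subtype.ext (Sym2.map_map (f := ψ) (g := φ) _).symm

lemma mapsTo_incidentEdges_lineGraph (φ : H ≃g H') (v : W) :
    MapsTo φ.lineGraph (H.incidentEdges v) (H'.incidentEdges (φ v)) :=
  fun _ he => Sym2.mem_map.2 ⟨v, he, rfl⟩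

lemma eq_of_mapsTo_incidentEdges {f : H.edgeSet → H'.edgeSet} (hf : Injective f) {v : W}
    {w w' : W'} (hv : 2 ≤ H.ncardDegree v) (hw : MapsTo f (H.incidentEdges v) (H'.incidentEdges w))
    (hw' : MapsTo f (H.incidentEdges v) (H'.incidentEdges w')) : w = w' := by
  rw [← ncard_incidentEdges] at hv
  obtain ⟨a, ha, b, hb, hab⟩ := (one_lt_ncard (finite_of_ncard_pos (by omega))).1 hv
  by_contra hne
  have hfa := (Sym2.mem_and_mem_iff hne).1 ⟨hw ha, hw' ha⟩
  have hfb := (Sym2.mem_and_mem_iff hne).1 ⟨hw hb, hw' hb⟩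
  exact hab (hf (Subtype.ext (hfa.trans hfb.symm)))

theorem lineGraphAutHom_injective (hdeg : ∀ v, 2 ≤ H.ncardDegree v) :
    Injective (lineGraphAutHom H) := fun φ ψ h => RelIso.ext fun v =>
  eq_of_mapsTo_incidentEdges (lineGraphAutHom H φ).injective (hdeg v)
    (mapsTo_incidentEdges_lineGraph φ v) (h ▸ mapsTo_incidentEdges_lineGraph ψ v)

lemma exists_mapsTo_incidentEdges (σ : H.lineGraph ≃g H'.lineGraph) {v : W}
    (hv : H.ncardDegree v = 2 ∨ 4 ≤ H.ncardDegree v) :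
    ∃ w, MapsTo σ (H.incidentEdges v) (H'.incidentEdges w) := by
  have hclique : H'.lineGraph.IsClique (σ '' H.incidentEdges v) := by
    rintro _ ⟨a, ha, rfl⟩ _ ⟨b, hb, rfl⟩ hne
    exact σ.map_adj_iff.2 (isClique_lineGraph_incidentEdges v ha hb (ne_of_apply_ne σ hne))
  rw [← ncard_incidentEdges, ← ncard_image_of_injective _ σ.injective] at hv
  obtain ⟨w, hw⟩ := exists_forall_mem_of_isClique_lineGraph hclique hv
  exact ⟨w, fun e he => hw _ (mem_image_of_mem σ he)⟩

lemma leftInverse_of_mapsTo_incidentEdges {σ : H.lineGraph ≃g H.lineGraph} {F F' : W → W}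
    (hdeg : ∀ v, 2 ≤ H.ncardDegree v)
    (hF : ∀ v, MapsTo σ (H.incidentEdges v) (H.incidentEdges (F v)))
    (hF' : ∀ v, MapsTo σ.symm (H.incidentEdges v) (H.incidentEdges (F' v))) :
    LeftInverse F' F := fun v => by
  have hcomp := (hF' (F v)).comp (hF v)
  rw [σ.symm_comp_self] at hcomp
  exact eq_of_mapsTo_incidentEdges injective_id (hdeg v) hcomp (mapsTo_id _)

lemma coe_apply_eq_map_of_mapsTo_incidentEdges {σ : H.lineGraph ≃g H'.lineGraph} {F : W → W'}
    (hF : ∀ v, MapsTo σ (H.incidentEdges v) (H'.incidentEdges (F v))) (hFinj : Injective F)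
    (e : H.edgeSet) : (σ e : Sym2 W') = (e : Sym2 W).map F := by
  rcases e with ⟨⟨u, v⟩, h⟩
  have hu : F u ∈ (σ ⟨s(u, v), h⟩ : Sym2 W') := hF u (Sym2.mem_mk_left u v)
  have hv : F v ∈ (σ ⟨s(u, v), h⟩ : Sym2 W') := hF v (Sym2.mem_mk_right u v)
  exact (Sym2.mem_and_mem_iff (hFinj.ne (H.ne_of_adj h))).1 ⟨hu, hv⟩

theorem lineGraphAutHom_surjective (hdeg : ∀ v, 2 ≤ H.ncardDegree v)
    (hstar : ∀ (σ : H.lineGraph ≃g H.lineGraph) v,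
      ∃ w, MapsTo σ (H.incidentEdges v) (H.incidentEdges w)) :
    Surjective (lineGraphAutHom H) := by
  intro σ
  choose F hF using hstar
  have hinv (σ) : LeftInverse (F σ.symm) (F σ) :=
    leftInverse_of_mapsTo_incidentEdges hdeg (hF σ) (hF σ.symm)
  have hmap (σ) := coe_apply_eq_map_of_mapsTo_incidentEdges (hF σ) (hinv σ).injective
  have hadj (σ) {u v : W} (h : H.Adj u v) : H.Adj (F σ u) (F σ v) := by
    simpa [hmap σ ⟨s(u, v), h⟩] using (σ ⟨s(u, v), h⟩).2
  let φ : H ≃g H :=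
    { toFun := F σ, invFun := F σ.symm, left_inv := hinv σ, right_inv := hinv σ.symm
      map_rel_iff' := fun {u v} => show H.Adj (F σ u) (F σ v) ↔ H.Adj u v from
        ⟨fun h => by simpa only [hinv σ _] using hadj σ.symm h, hadj σ⟩ }
  exact ⟨φ, RelIso.ext fun e => Subtype.ext (hmap σ e).symm⟩

def DegreesTwoOrAtLeastFour (H : SimpleGraph W) : Prop :=
  ∀ v, H.ncardDegree v = 2 ∨ 4 ≤ H.ncardDegree v

theorem DegreesTwoOrAtLeastFour.lineGraphAutHom_bijective (hdeg : H.DegreesTwoOrAtLeastFour) :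
    Bijective (lineGraphAutHom H) := by
  have hdeg2 (v : W) : 2 ≤ H.ncardDegree v := by rcases hdeg v with h | h <;> omega
  exact ⟨lineGraphAutHom_injective hdeg2, lineGraphAutHom_surjective hdeg2
    fun σ v => exists_mapsTo_incidentEdges σ (hdeg v)⟩

lemma Connected.lineGraph [Nontrivial W] (hconn : H.Connected) : H.lineGraph.Connected := by
  have reachable_of_mem {x : W} {e f : H.edgeSet} (he : x ∈ (e : Sym2 W))
      (hf : x ∈ (f : Sym2 W)) : H.lineGraph.Reachable e f := by
    obtain rfl | hne := eq_or_ne e f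
    · rfl
    · exact (lineGraph_adj_iff_exists.2 ⟨hne, x, he, hf⟩).reachable
  have walk_reachable {u v : W} (p : H.Walk u v) :
      ∀ e f : H.edgeSet, u ∈ (e : Sym2 W) → v ∈ (f : Sym2 W) → H.lineGraph.Reachable e f := by
    induction p with
    | nil => exact fun e f he hf => reachable_of_mem he hf
    | cons h p ih =>
      exact fun e f he hf => (reachable_of_mem he (Sym2.mem_mk_left _ _)).trans
        (ih ⟨_, h⟩ f (Sym2.mem_mk_right _ _) hf)
  obtain ⟨b, hab⟩ := hconn.preconnected.exists_adj_of_nontrivial (Classical.arbitrary W)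
  refine (connected_iff _).2 ⟨fun e f => ?_, ⟨⟨s(_, b), hab⟩⟩⟩
  rcases e with ⟨⟨u, u'⟩, -⟩
  rcases f with ⟨⟨v, v'⟩, -⟩
  exact walk_reachable (hconn.preconnected u v).some _ _ (Sym2.mem_mk_left _ _)
    (Sym2.mem_mk_left _ _)

lemma Connected.one_le_ncardDegree [Finite W] [Nontrivial W] (hconn : H.Connected) (v : W) :
    1 ≤ H.ncardDegree v := by
  obtain ⟨u, hu⟩ := hconn.preconnected.exists_adj_of_nontrivial v
  exact (ncard_pos (toFinite _)).2 ⟨u, hu⟩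

lemma DegreesTwoOrAtLeastFour.lineGraph [Finite W] (h : H.DegreesTwoOrAtLeastFour) :
    H.lineGraph.DegreesTwoOrAtLeastFour := by
  rintro ⟨e, he⟩
  induction e with
  | _ u v =>
    have := ncardDegree_lineGraph_mk (u := u) (v := v) he
    have := h u
    have := h v
    omega

lemma degreesTwoOrAtLeastFour_lineGraph_of_three_le [Finite W] (h : ∀ v, 3 ≤ H.ncardDegree v) :
    H.lineGraph.DegreesTwoOrAtLeastFour := by
  rintro ⟨e, he⟩
  induction e with
  | _ u v =>
    have := ncardDegree_lineGraph_mk (u := u) (v := v) he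
    have := h u
    have := h v
    omega

-- Truncated subtraction: only vertices of degree at most 2 contribute.
noncomputable def lowDegreePotential (H : SimpleGraph W) : ℕ := ∑ᶠ v, (3 - H.ncardDegree v)

/-- An edge `uv` of degrees `a, b` becomes a vertex of `L(H)` of degree `a + b - 2`; twice its
deficit `3 - (a + b - 2)` is paid for by a charge from each endpoint, and a vertex of degree `d`
pays `d` times, which stays within twice its own deficit `3 - d`. -/
def deficitCharge (d : ℕ) : ℕ := if d ≤ 1 then 4 else if d = 2 then 1 else 0

lemma two_mul_deficit_le_deficitCharge_add {a b d : ℕ} (ha : 1 ≤ a) (hb : 1 ≤ b)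
    (h : d + 2 = a + b) : 2 * (3 - d) ≤ deficitCharge a + deficitCharge b := by
  unfold deficitCharge; split_ifs <;> omega

lemma two_mul_deficit_lt_deficitCharge_add {a b d : ℕ} (ha : 1 ≤ a) (hb : 1 ≤ b)
    (h : d + 2 = a + b) (hab : a = 1 ∨ a = 2 ∧ 3 ≤ b) :
    2 * (3 - d) < deficitCharge a + deficitCharge b := by
  unfold deficitCharge; split_ifs <;> omega

lemma mul_deficitCharge_le (d : ℕ) : d * deficitCharge d ≤ 2 * (3 - d) := by
  unfold deficitCharge; split_ifs <;> omega

lemma sum_edgeSet_sum_toFinset [Fintype W] [DecidableEq W] [Fintype H.edgeSet] (f : W → ℕ) :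
    ∑ e : H.edgeSet, ∑ v ∈ (e : Sym2 W).toFinset, f v = ∑ v, H.ncardDegree v * f v := by
  classical
  rw [Finset.sum_comm' (t' := Finset.univ) (s' := fun v => (H.incidentEdges v).toFinset)
    (by simp)]
  simp [← ncard_incidentEdges, ncard_eq_toFinset_card']

lemma exists_adj_ncardDegree_eq_one_or_eq_two [Finite W] [Nontrivial W] (hconn : H.Connected)
    (hreg : ¬ ∀ v, H.ncardDegree v = 2) (hlow : ∃ v, H.ncardDegree v < 3) :
    ∃ u v, H.Adj u v ∧
      (H.ncardDegree u = 1 ∨ H.ncardDegree u = 2 ∧ 3 ≤ H.ncardDegree v) := by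
  have hpos := hconn.one_le_ncardDegree
  by_cases hleaf : ∃ u, H.ncardDegree u = 1
  · obtain ⟨u, hu⟩ := hleaf
    obtain ⟨v, hv⟩ := hconn.preconnected.exists_adj_of_nontrivial u
    exact ⟨u, v, hv, .inl hu⟩
  push Not at hleaf hreg
  obtain ⟨v, hv⟩ := hlow
  obtain ⟨w, hw⟩ := hreg
  obtain ⟨d, -, hd, hd'⟩ := (hconn.preconnected v w).some.exists_boundary_dart
    {x | H.ncardDegree x = 2} (by grind) hw
  have := hpos d.snd
  have := hleaf d.snd
  exact ⟨d.fst, d.snd, d.adj, .inr ⟨hd, by grind⟩⟩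

theorem lowDegreePotential_lineGraph_lt [Finite W] [Nontrivial W] (hconn : H.Connected)
    (hreg : ¬ ∀ v, H.ncardDegree v = 2) (hlow : ∃ v, H.ncardDegree v < 3) :
    H.lineGraph.lowDegreePotential < H.lowDegreePotential := by
  classical
  have := Fintype.ofFinite W
  have := Fintype.ofFinite H.edgeSet
  have hpos := hconn.one_le_ncardDegree
  let charge (e : H.edgeSet) := ∑ v ∈ (e : Sym2 W).toFinset, deficitCharge (H.ncardDegree v)
  have charge_mk {u v : W} (h : H.Adj u v) : charge ⟨s(u, v), h⟩ =
      deficitCharge (H.ncardDegree u) + deficitCharge (H.ncardDegree v) := by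
    simp [charge, Sym2.toFinset_mk_eq, Finset.sum_pair h.ne]
  have hle (e : H.edgeSet) : 2 * (3 - H.lineGraph.ncardDegree e) ≤ charge e := by
    rcases e with ⟨⟨u, v⟩, h⟩
    exact charge_mk h ▸ two_mul_deficit_le_deficitCharge_add (hpos u) (hpos v)
      (ncardDegree_lineGraph_mk h)
  obtain ⟨u, v, h, huv⟩ := exists_adj_ncardDegree_eq_one_or_eq_two hconn hreg hlow
  have hlt : 2 * (3 - H.lineGraph.ncardDegree ⟨s(u, v), h⟩) < charge ⟨s(u, v), h⟩ :=
    charge_mk h ▸ two_mul_deficit_lt_deficitCharge_add (hpos u) (hpos v)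
      (ncardDegree_lineGraph_mk h) huv
  suffices 2 * H.lineGraph.lowDegreePotential < 2 * H.lowDegreePotential by omega
  simp only [lowDegreePotential, finsum_eq_sum_of_fintype, Finset.mul_sum]
  calc ∑ e, 2 * (3 - H.lineGraph.ncardDegree e)
      < ∑ e, charge e := Finset.sum_lt_sum (fun e _ => hle e) ⟨_, Finset.mem_univ _, hlt⟩
    _ = ∑ v, H.ncardDegree v * deficitCharge (H.ncardDegree v) := sum_edgeSet_sum_toFinset _
    _ ≤ ∑ v, 2 * (3 - H.ncardDegree v) :=
      Finset.sum_le_sum fun v _ => mul_deficitCharge_le _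

end SimpleGraph

instance finite_iterLineGraph {V : Type u} [Finite V] (G : SimpleGraph V) :
    ∀ k, Finite (iterLineGraph G k).1
  | 0 => ‹Finite V›
  | k + 1 => have := finite_iterLineGraph G k; Subtype.finite

lemma iterLineGraph_succ {V : Type u} (G : SimpleGraph V) (k : ℕ) :
    iterLineGraph G (k + 1) = iterLineGraph G.lineGraph k := by
  induction k with
  | zero => rfl
  | succ k ih => rw [iterLineGraph, ih, iterLineGraph]

lemma degreesTwoOrAtLeastFour_iterLineGraph_of_le {V : Type u} [Finite V] {G : SimpleGraph V}
    {K k : ℕ} (hK : (iterLineGraph G K).2.DegreesTwoOrAtLeastFour) (hk : K ≤ k) :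
    (iterLineGraph G k).2.DegreesTwoOrAtLeastFour := by
  induction k, hk using Nat.le_induction with
  | base => exact hK
  | succ k _ ih => exact ih.lineGraph

theorem exists_degreesTwoOrAtLeastFour_iterLineGraph {V : Type u} [Finite V]
    {G : SimpleGraph V} (hconn : G.Connected) :
    ∃ K, (iterLineGraph G K).2.DegreesTwoOrAtLeastFour := by
  obtain ⟨n, hn⟩ : ∃ n, G.lowDegreePotential = n := ⟨_, rfl⟩
  induction n using Nat.strong_induction_on generalizing V with
  | _ n ih =>
  by_cases hreg : ∀ v, G.ncardDegree v = 2
  · exact ⟨0, fun v => .inl (hreg v)⟩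
  by_cases hthree : ∀ v, 3 ≤ G.ncardDegree v
  · exact ⟨1, degreesTwoOrAtLeastFour_lineGraph_of_three_le hthree⟩
  cases subsingleton_or_nontrivial V
  · refine ⟨1, fun ⟨e, he⟩ => ?_⟩
    induction e with
    | _ u v => exact (G.ne_of_adj he (Subsingleton.elim (α := V) u v)).elim
  push Not at hthree
  obtain ⟨K, hK⟩ := ih _ (hn ▸ lowDegreePotential_lineGraph_lt hconn hreg hthree)
    hconn.lineGraph rfl
  exact ⟨K + 1, iterLineGraph_succ G K ▸ hK⟩

theorem aut_iterLineGraph_stabilizes_general {V : Type u} [Fintype V] (G : SimpleGraph V)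
    (hconn : G.Connected) :
    ∃ K : ℕ, (∀ k ≥ K,
      ∃ Γ : ((iterLineGraph G k).2 ≃g (iterLineGraph G k).2) ≃*
            ((iterLineGraph G (k + 1)).2 ≃g (iterLineGraph G (k + 1)).2),
        ∀ (φ : (iterLineGraph G k).2 ≃g (iterLineGraph G k).2)
          (x : (iterLineGraph G (k + 1)).1),
          (iterVertexAsEdge G k ((Γ φ) x) : Sym2 (iterLineGraph G k).1) =
            Sym2.map φ (iterVertexAsEdge G k x : Sym2 (iterLineGraph G k).1)) ∧
      ∀ k ≥ K, Nonempty
        (((iterLineGraph G K).2 ≃g (iterLineGraph G K).2) ≃*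
         ((iterLineGraph G k).2 ≃g (iterLineGraph G k).2)) := by
  obtain ⟨K, hK⟩ := exists_degreesTwoOrAtLeastFour_iterLineGraph hconn
  have hbij (k : ℕ) (hk : k ≥ K) : Bijective (lineGraphAutHom (iterLineGraph G k).2) :=
    (degreesTwoOrAtLeastFour_iterLineGraph_of_le hK hk).lineGraphAutHom_bijective
  refine ⟨K, fun k hk => ⟨MulEquiv.ofBijective _ (hbij k hk), fun _ _ => rfl⟩, fun k hk => ?_⟩
  induction k, hk using Nat.le_induction with
  | base => exact ⟨MulEquiv.refl _⟩
  | succ k hk ih => exact ⟨ih.some.trans (MulEquiv.ofBijective _ (hbij k hk))⟩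

/-- If `G` is a finite connected simple graph that is not a path, then there is a `K` such that
for all `k ≥ K` the natural map `γ_{L^k(G)} : Aut(L^k(G)) → Aut(L^{k+1}(G))`, sending `φ` to
the automorphism `{u,v} ↦ {φ u, φ v}` of the line graph, is a group isomorphism; in particular
all the automorphism groups `Aut(L^k(G))` for `k ≥ K` are isomorphic. -/
theorem aut_iterLineGraph_stabilizes {V : Type u} [Fintype V] (G : SimpleGraph V)
    (hconn : G.Connected)
    (hpath : ¬ ∃ n : ℕ, Nonempty (G ≃g pathGraph n)) :
    ∃ K : ℕ, (∀ k ≥ K,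
      ∃ Γ : ((iterLineGraph G k).2 ≃g (iterLineGraph G k).2) ≃*
            ((iterLineGraph G (k + 1)).2 ≃g (iterLineGraph G (k + 1)).2),
        ∀ (φ : (iterLineGraph G k).2 ≃g (iterLineGraph G k).2)
          (x : (iterLineGraph G (k + 1)).1),
          (iterVertexAsEdge G k ((Γ φ) x) : Sym2 (iterLineGraph G k).1) =
            Sym2.map φ (iterVertexAsEdge G k x : Sym2 (iterLineGraph G k).1)) ∧
      ∀ k ≥ K, Nonempty
        (((iterLineGraph G K).2 ≃g (iterLineGraph G K).2) ≃*
         ((iterLineGraph G k).2 ≃g (iterLineGraph G k).2)) :=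
  aut_iterLineGraph_stabilizes_general G hconn
end

section
/- Let G be a finite connected simple graph such that neither G nor L(G) is P_2, the paw graph Q, or the diamond graph L(Q). Let φ ∈ Aut(L^2(G)) and let φ' ∈ Aut(G) be such that γ_{G,2}(φ') = φ. Then for every vertex v of G, φ(⟨v⟩_1) = ⟨φ'(v)⟩_1, where ⟨v⟩_1 = f_G^{-1}(v). -/
open SimpleGraph

/-- The paw graph `Q`: a triangle with one pendant edge. -/
noncomputable def pawGraph : SimpleGraph (Fin 4) :=
  SimpleGraph.fromEdgeSet {s(0, 1), s(0, 2), s(1, 2), s(2, 3)}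

/-- The diamond graph `L(Q)`: `K₄` minus one edge. -/
noncomputable def diamondGraph : SimpleGraph (Fin 4) :=
  SimpleGraph.fromEdgeSet {s(0, 1), s(0, 2), s(0, 3), s(1, 2), s(1, 3)}

/-- Let `G` be a finite connected simple graph such that neither `G` nor `L(G)` is `P₂`, the paw
graph, or the diamond graph.  Let `f = f_G : V(L²(G)) → V(G)` be the map sending a vertex of
`L²(G)` (a pair of incident edges of `G`) to the common endpoint of these two edges.  If
`φ ∈ Aut(L²(G))` and `φ' ∈ Aut(G)` satisfy `γ_{G,2}(φ') = φ` (witnessed by the intermediate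
automorphism `ψ = γ_G(φ') ∈ Aut(L(G))` with `γ_{L(G)}(ψ) = φ`), then for every vertex `v` of
`G` we have `φ(⟨v⟩₁) = ⟨φ'(v)⟩₁`, where `⟨v⟩₁ = f_G⁻¹(v)`. -/
theorem image_cluster_one {V : Type*} [Fintype V] (G : SimpleGraph V)
    (hconn : G.Connected)
    (hP2 : ¬ Nonempty (G ≃g pathGraph 2))
    (hQ : ¬ Nonempty (G ≃g pawGraph))
    (hLQ : ¬ Nonempty (G ≃g diamondGraph))
    (hP2' : ¬ Nonempty (G.lineGraph ≃g pathGraph 2))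
    (hQ' : ¬ Nonempty (G.lineGraph ≃g pawGraph))
    (hLQ' : ¬ Nonempty (G.lineGraph ≃g diamondGraph))
    -- `f` is the map `f_G : V(L²(G)) → V(G)`, sending a pair of incident edges of `G`
    -- to their common endpoint:
    (f : G.lineGraph.edgeSet → V)
    (hf : ∀ z : G.lineGraph.edgeSet, ∀ e ∈ (z : Sym2 G.edgeSet), f z ∈ (e : Sym2 V))
    -- `φ ∈ Aut(L²(G))`, `φ' ∈ Aut(G)` with `γ_{G,2}(φ') = φ`:
    (φ : G.lineGraph.lineGraph ≃g G.lineGraph.lineGraph)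
    (φ' : G ≃g G)
    (ψ : G.lineGraph ≃g G.lineGraph)
    (hψ : ∀ e : G.edgeSet, ((ψ e : Sym2 V)) = Sym2.map φ' (e : Sym2 V))
    (hφ : ∀ z : G.lineGraph.edgeSet,
      ((φ z : Sym2 G.edgeSet)) = Sym2.map ψ (z : Sym2 G.edgeSet)) :
    ∀ v : V, ⇑φ '' (f ⁻¹' {v}) = f ⁻¹' {φ' v} := by
  -- two distinct edges share at most one vertex
  have uniq : ∀ (e₁ e₂ : G.edgeSet), e₁ ≠ e₂ → ∀ a b : V,
      a ∈ (e₁ : Sym2 V) → a ∈ (e₂ : Sym2 V) → b ∈ (e₁ : Sym2 V) → b ∈ (e₂ : Sym2 V) →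
      a = b := by
    intro e₁ e₂ hne a b ha1 ha2 hb1 hb2
    by_contra hab
    exact hne (Subtype.ext (((Sym2.mem_and_mem_iff hab).1 ⟨ha1, hb1⟩).trans
      ((Sym2.mem_and_mem_iff hab).1 ⟨ha2, hb2⟩).symm))
  have key : ∀ z : G.lineGraph.edgeSet, f (φ z) = φ' (f z) := by
    rintro ⟨z, hz⟩
    induction z using Sym2.ind with
    | _ e₁ e₂ =>
      have hadj : G.lineGraph.Adj e₁ e₂ := hz
      have hne : e₁ ≠ e₂ := hadj.ne
      set Z : G.lineGraph.edgeSet := ⟨s(e₁, e₂), hz⟩ with hZ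
      have h1 : f Z ∈ (e₁ : Sym2 V) := hf Z e₁ (by simp [hZ])
      have h2 : f Z ∈ (e₂ : Sym2 V) := hf Z e₂ (by simp [hZ])
      have hm1 : ψ e₁ ∈ (φ Z : Sym2 G.edgeSet) := by
        rw [hφ Z]; simp [hZ]
      have hm2 : ψ e₂ ∈ (φ Z : Sym2 G.edgeSet) := by
        rw [hφ Z]; simp [hZ]
      have g1 : f (φ Z) ∈ Sym2.map φ' (e₁ : Sym2 V) := by
        rw [← hψ e₁]; exact hf (φ Z) (ψ e₁) hm1
      have g2 : f (φ Z) ∈ Sym2.map φ' (e₂ : Sym2 V) := by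
        rw [← hψ e₂]; exact hf (φ Z) (ψ e₂) hm2
      obtain ⟨a, ha, hae⟩ := Sym2.mem_map.1 g1
      obtain ⟨b, hb, hbe⟩ := Sym2.mem_map.1 g2
      have hab : a = b := φ'.toEquiv.injective (hae.trans hbe.symm)
      subst hab
      have : a = f Z := uniq e₁ e₂ hne a (f Z) ha hb h1 h2
      rw [← hae, this]
  intro v
  ext x
  simp only [Set.mem_image, Set.mem_preimage, Set.mem_singleton_iff]
  constructor
  · rintro ⟨z, hz, rfl⟩
    rw [key z, hz]
  · intro hx
    refine ⟨φ.symm x, ?_, φ.apply_symm_apply x⟩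
    have := key (φ.symm x)
    rw [φ.apply_symm_apply] at this
    exact φ'.toEquiv.injective ((this.symm.trans hx : φ' (f (φ.symm x)) = φ' v))
end

section
/- Let G be a finite connected simple graph with minimum degree δ(G) ≥ 3. Then for every vertex v of G and every m ≥ 1, the sets satisfy |⟨v⟩_{m+1}| > |⟨v⟩_m|. -/
open SimpleGraph

universe u

/-- Given the family of maps `f k = f_{L^{2k}(G)} : V(L^{2k+2}(G)) → V(L^{2k}(G))`,
`cluster G f v m` is the set `⟨v⟩_m ⊆ V(L^{2m}(G))`, defined by `⟨v⟩_0 = {v}`,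
`⟨v⟩_{m+1} = ⋃_{u ∈ ⟨v⟩_m} (f m)⁻¹(u)`.  (In particular `⟨v⟩_1 = f_G⁻¹(v)`.) -/
def cluster {V : Type u} (G : SimpleGraph V)
    (f : ∀ k : ℕ, (iterLineGraph G (2 * k + 2)).1 → (iterLineGraph G (2 * k)).1)
    (v : V) : (m : ℕ) → Set ((iterLineGraph G (2 * m)).1)
  | 0 => ({v} : Set V)
  | m + 1 => f m ⁻¹' (cluster G f v m)

private lemma finite_iter {V : Type u} [Finite V] (G : SimpleGraph V) (k : ℕ) :
    Finite (iterLineGraph G k).1 := by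
  induction k with
  | zero => exact ‹Finite V›
  | succ k ih =>
    show Finite (iterLineGraph G k).2.edgeSet
    infer_instance

/-- Min degree ≥ 3 is preserved by the line graph. -/
private lemma lineGraph_min_degree {W : Type u} [Finite W] (H : SimpleGraph W)
    (h : ∀ w, 3 ≤ (H.neighborSet w).ncard) (e : H.edgeSet) :
    3 ≤ (H.lineGraph.neighborSet e).ncard := by
  obtain ⟨e', he⟩ := e
  induction e' using Sym2.ind with
  | _ x y =>
  rw [SimpleGraph.mem_edgeSet] at he
  -- get two neighbors of x other than y
  obtain ⟨a0, ha0, b0, hb0, c0, hc0, hab0, hac0, hbc0⟩ :=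
    (Set.two_lt_ncard (Set.toFinite _)).mp (h x)
  obtain ⟨a, b, ha, hb, hab, hay, hby⟩ :
      ∃ a b, a ∈ H.neighborSet x ∧ b ∈ H.neighborSet x ∧ a ≠ b ∧ a ≠ y ∧ b ≠ y := by
    by_cases h1 : a0 = y
    · subst h1
      exact ⟨b0, c0, hb0, hc0, hbc0, Ne.symm hab0, Ne.symm hac0⟩
    · by_cases h2 : b0 = y
      · subst h2
        exact ⟨a0, c0, ha0, hc0, hac0, h1, Ne.symm hbc0⟩
      · exact ⟨a0, b0, ha0, hb0, hab0, h1, h2⟩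
  -- get one neighbor of y other than x
  obtain ⟨a1, ha1, b1, hb1, c1, hc1, hab1, hac1, hbc1⟩ :=
    (Set.two_lt_ncard (Set.toFinite _)).mp (h y)
  obtain ⟨c, hc, hcx⟩ : ∃ c, c ∈ H.neighborSet y ∧ c ≠ x := by
    by_cases h1 : a1 = x
    · subst h1
      exact ⟨b1, hb1, Ne.symm hab1⟩
    · exact ⟨a1, ha1, h1⟩
  rw [SimpleGraph.mem_neighborSet] at ha hb hc
  have hxy : x ≠ y := H.ne_of_adj he
  have hax : a ≠ x := (H.ne_of_adj ha).symm
  have hbx : b ≠ x := (H.ne_of_adj hb).symm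
  have hcy : c ≠ y := (H.ne_of_adj hc).symm
  refine (Set.two_lt_ncard (Set.toFinite _)).mpr
    ⟨⟨s(x, a), H.mem_edgeSet.mpr ha⟩, ?_, ⟨s(x, b), H.mem_edgeSet.mpr hb⟩, ?_,
      ⟨s(y, c), H.mem_edgeSet.mpr hc⟩, ?_, ?_, ?_, ?_⟩
  · refine lineGraph_adj_iff_exists.mpr ⟨?_, x, by simp, by simp⟩
    simp only [ne_eq, Subtype.mk.injEq, Sym2.eq_iff]
    rintro (⟨-, rfl⟩ | ⟨rfl, -⟩) <;> simp_all
  · refine lineGraph_adj_iff_exists.mpr ⟨?_, x, by simp, by simp⟩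
    simp only [ne_eq, Subtype.mk.injEq, Sym2.eq_iff]
    rintro (⟨-, rfl⟩ | ⟨rfl, -⟩) <;> simp_all
  · refine lineGraph_adj_iff_exists.mpr ⟨?_, y, by simp, by simp⟩
    simp only [ne_eq, Subtype.mk.injEq, Sym2.eq_iff]
    rintro (⟨rfl, -⟩ | ⟨rfl, -⟩) <;> simp_all
  · simp only [ne_eq, Subtype.mk.injEq, Sym2.eq_iff]
    rintro (⟨-, rfl⟩ | ⟨rfl, rfl⟩) <;> simp_all
  · simp only [ne_eq, Subtype.mk.injEq, Sym2.eq_iff]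
    rintro (⟨rfl, -⟩ | ⟨rfl, -⟩) <;> simp_all
  · simp only [ne_eq, Subtype.mk.injEq, Sym2.eq_iff]
    rintro (⟨rfl, -⟩ | ⟨rfl, -⟩) <;> simp_all

/-- Every fiber of a "common endpoint" map `g : V(L²(H)) → V(H)` has at least two
elements when `δ(H) ≥ 3`. -/
private lemma fiber_two {W : Type u} [Finite W] (H : SimpleGraph W)
    (g : H.lineGraph.edgeSet → W)
    (hg : ∀ z : H.lineGraph.edgeSet, ∀ e ∈ (z : Sym2 H.edgeSet), g z ∈ (e : Sym2 W))
    (u : W) (hu : 3 ≤ (H.neighborSet u).ncard) :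
    ∃ z₁ z₂ : H.lineGraph.edgeSet, z₁ ≠ z₂ ∧ g z₁ = u ∧ g z₂ = u := by
  obtain ⟨a, ha, b, hb, c, hc, hab, hac, hbc⟩ :=
    (Set.two_lt_ncard (Set.toFinite _)).mp hu
  rw [SimpleGraph.mem_neighborSet] at ha hb hc
  have hau : a ≠ u := (H.ne_of_adj ha).symm
  have hbu : b ≠ u := (H.ne_of_adj hb).symm
  have hcu : c ≠ u := (H.ne_of_adj hc).symm
  set ea : H.edgeSet := ⟨s(u, a), H.mem_edgeSet.mpr ha⟩ with hea
  set eb : H.edgeSet := ⟨s(u, b), H.mem_edgeSet.mpr hb⟩ with heb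
  set ec : H.edgeSet := ⟨s(u, c), H.mem_edgeSet.mpr hc⟩ with hec
  have hneab : ea ≠ eb := by
    simp only [hea, heb, ne_eq, Subtype.mk.injEq, Sym2.eq_iff]
    rintro (⟨-, rfl⟩ | ⟨rfl, -⟩) <;> simp_all
  have hneac : ea ≠ ec := by
    simp only [hea, hec, ne_eq, Subtype.mk.injEq, Sym2.eq_iff]
    rintro (⟨-, rfl⟩ | ⟨rfl, -⟩) <;> simp_all
  have hnebc : eb ≠ ec := by
    simp only [heb, hec, ne_eq, Subtype.mk.injEq, Sym2.eq_iff]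
    rintro (⟨-, rfl⟩ | ⟨rfl, -⟩) <;> simp_all
  have hadj1 : H.lineGraph.Adj ea eb :=
    lineGraph_adj_iff_exists.mpr ⟨hneab, u, by simp [hea], by simp [heb]⟩
  have hadj2 : H.lineGraph.Adj ea ec :=
    lineGraph_adj_iff_exists.mpr ⟨hneac, u, by simp [hea], by simp [hec]⟩
  refine ⟨⟨s(ea, eb), H.lineGraph.mem_edgeSet.mpr hadj1⟩,
    ⟨s(ea, ec), H.lineGraph.mem_edgeSet.mpr hadj2⟩, ?_, ?_, ?_⟩
  · simp only [ne_eq, Subtype.mk.injEq, Sym2.eq_iff]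
    rintro (⟨-, h'⟩ | ⟨h', -⟩)
    · exact hnebc h'
    · exact hneac h'
  · have h1 := hg ⟨s(ea, eb), H.lineGraph.mem_edgeSet.mpr hadj1⟩ ea (Sym2.mem_mk_left ea eb)
    have h2 := hg ⟨s(ea, eb), H.lineGraph.mem_edgeSet.mpr hadj1⟩ eb (Sym2.mem_mk_right ea eb)
    simp only [hea, Sym2.mem_iff] at h1
    simp only [heb, Sym2.mem_iff] at h2
    rcases h1 with h1 | h1
    · exact h1
    · rcases h2 with h2 | h2
      · exact h2
      · exact absurd (h1.symm.trans h2) hab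
  · have h1 := hg ⟨s(ea, ec), H.lineGraph.mem_edgeSet.mpr hadj2⟩ ea (Sym2.mem_mk_left ea ec)
    have h2 := hg ⟨s(ea, ec), H.lineGraph.mem_edgeSet.mpr hadj2⟩ ec (Sym2.mem_mk_right ea ec)
    simp only [hea, Sym2.mem_iff] at h1
    simp only [hec, Sym2.mem_iff] at h2
    rcases h1 with h1 | h1
    · exact h1
    · rcases h2 with h2 | h2
      · exact h2
      · exact absurd (h1.symm.trans h2) hac

private lemma preimage_ncard_lt {A B : Type u} [Finite A] [Finite B] (g : A → B)
    (S : Set B) (hS : S.Nonempty)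
    (hfib : ∀ u : B, ∃ z₁ z₂ : A, z₁ ≠ z₂ ∧ g z₁ = u ∧ g z₂ = u) :
    S.ncard < (g ⁻¹' S).ncard := by
  choose p q hpq hp hq using hfib
  set F : ↥S ⊕ ↥S → ↥(g ⁻¹' S) := fun x =>
    Sum.elim (fun u : ↥S => (⟨p u, by simp only [Set.mem_preimage, hp]; exact u.2⟩ : ↥(g ⁻¹' S)))
      (fun u : ↥S => (⟨q u, by simp only [Set.mem_preimage, hq]; exact u.2⟩ : ↥(g ⁻¹' S))) x
    with hF
  have hinj : Function.Injective F := by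
    rintro (u | u) (u' | u') h <;>
      simp only [hF, Sum.elim_inl, Sum.elim_inr, Subtype.mk.injEq] at h
    · have : (u : B) = u' := by rw [← hp u, ← hp u', h]
      exact congrArg Sum.inl (Subtype.ext this)
    · have huu : (u : B) = u' := by rw [← hp u, ← hq u', h]
      exact absurd (h.trans (by rw [huu])) (hpq u)
    · have huu : (u : B) = u' := by rw [← hq u, ← hp u', h]
      exact absurd ((h.trans (by rw [huu])).symm) (hpq u)
    · have : (u : B) = u' := by rw [← hq u, ← hq u', h]
      exact congrArg Sum.inr (Subtype.ext this)
  have hcard : Nat.card (↥S ⊕ ↥S) ≤ Nat.card ↥(g ⁻¹' S) :=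
    Nat.card_le_card_of_injective F hinj
  rw [Nat.card_sum, Nat.card_coe_set_eq, Nat.card_coe_set_eq] at hcard
  have hpos : 0 < S.ncard := (Set.ncard_pos (Set.toFinite _)).mpr hS
  omega

/-- If `G` is a finite connected simple graph with minimum degree `δ(G) ≥ 3`, then for every
vertex `v` of `G` and every `m ≥ 1` we have `|⟨v⟩_{m+1}| > |⟨v⟩_m|`.  Here the maps
`f k = f_{L^{2k}(G)}` send a vertex of `L^{2k+2}(G)` (a pair of incident edges of `L^{2k}(G)`)
to the common endpoint of these two edges, and `⟨v⟩_m ⊆ V(L^{2m}(G))` is as in the paper. -/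
theorem cluster_card_strict_mono {V : Type u} [Fintype V] (G : SimpleGraph V)
    (hconn : G.Connected)
    (hdeg : ∀ v : V, 3 ≤ (G.neighborSet v).ncard)
    (f : ∀ k : ℕ, (iterLineGraph G (2 * k + 2)).1 → (iterLineGraph G (2 * k)).1)
    (hf : ∀ (k : ℕ) (z : (iterLineGraph G (2 * k + 2)).1),
      ∀ e ∈ (iterVertexAsEdge G (2 * k + 1) z : Sym2 (iterLineGraph G (2 * k + 1)).1),
        f k z ∈ (iterVertexAsEdge G (2 * k) e : Sym2 (iterLineGraph G (2 * k)).1)) :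
    ∀ v : V, ∀ m : ℕ, 1 ≤ m →
      (cluster G f v m).ncard < (cluster G f v (m + 1)).ncard := by
  intro v m _
  have hfin : ∀ k, Finite (iterLineGraph G k).1 := finite_iter G
  have hdeg' : ∀ k, ∀ u : (iterLineGraph G k).1,
      3 ≤ ((iterLineGraph G k).2.neighborSet u).ncard := by
    intro k
    induction k with
    | zero => exact hdeg
    | succ k ih =>
      intro u
      haveI := hfin k
      exact lineGraph_min_degree (iterLineGraph G k).2 ih u
  have hfib : ∀ k (u : (iterLineGraph G (2 * k)).1),
      ∃ z₁ z₂ : (iterLineGraph G (2 * k + 2)).1, z₁ ≠ z₂ ∧ f k z₁ = u ∧ f k z₂ = u := by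
    intro k u
    haveI := hfin (2 * k)
    exact fiber_two (iterLineGraph G (2 * k)).2 (f k) (hf k) u (hdeg' (2 * k) u)
  have hne : ∀ n, (cluster G f v n).Nonempty := by
    intro n
    induction n with
    | zero => exact ⟨v, rfl⟩
    | succ n ih =>
      obtain ⟨u, hu⟩ := ih
      obtain ⟨z₁, z₂, _, hz, _⟩ := hfib n u
      exact ⟨z₁, show f n z₁ ∈ _ from hz ▸ hu⟩
  haveI := hfin (2 * m)
  haveI := hfin (2 * m + 2)
  exact preimage_ncard_lt (f m) (cluster G f v m) (hne m) (hfib m)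
end

section
/- Let T be a finite tree with at least 3 vertices, let S_i be a connected component of T − C(T) with v_i its unique vertex adjacent to the center, and let S'_i be the subgraph of L(T) induced on the vertex set {e_v : v ∈ V(S_i)}, with A'_i the group of automorphisms of S'_i fixing e_{v_i}. Then for every k ≥ 1, D(S_i;k) = D(S'_i;k), where D(S'_i;k) is defined analogously to D(S_i;k) with e_{v_i} as the fixed root. -/
open SimpleGraph

universe u

/-- The eccentricity of a vertex: the largest (extended) distance from `v` to any vertex. -/
noncomputable def eccentricity {V : Type u} (T : SimpleGraph V) (v : V) : ℕ∞ :=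
  ⨆ w, T.edist v w

/-- The center `C(T)` of a graph: the set of vertices of minimum eccentricity. -/
noncomputable def centerSet {V : Type u} (T : SimpleGraph V) : Set V :=
  {v | ∀ w, eccentricity T v ≤ eccentricity T w}

/-- The distance from a vertex to the center. -/
noncomputable def distToCenter {V : Type u} (T : SimpleGraph V) (v : V) : ℕ :=
  sInf ((fun c => T.dist v c) '' centerSet T)

/-- A `k`-coloring `f` of `H` distinguishes `H` with respect to the automorphisms of `H`
fixing the root `r` if no nontrivial such automorphism preserves `f`. -/
def IsRootedSB {W : Type u} (H : SimpleGraph W) (r : W) {k : ℕ} (f : W → Fin k) : Prop :=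
  ∀ φ : H ≃g H, φ r = r → (∀ x, f (φ x) = f x) → ∀ x, φ x = x

/-- Two rooted distinguishing `k`-colorings are equivalent when they differ by an
automorphism fixing the root. -/
def rootedSBRel {W : Type u} (H : SimpleGraph W) (r : W) (k : ℕ)
    (f g : {f : W → Fin k // IsRootedSB H r f}) : Prop :=
  ∃ φ : H ≃g H, φ r = r ∧ ∀ x, (f : W → Fin k) x = (g : W → Fin k) (φ x)

/-- `D(H;k)` for the rooted graph `(H, r)`: the number of equivalence classes of `k`-colorings
of `H` which distinguish `H` with respect to the root-fixing automorphism group. -/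
noncomputable def rootedSBCount {W : Type u} (H : SimpleGraph W) (r : W) (k : ℕ) : ℕ :=
  Nat.card (Quot (rootedSBRel H r k))

/-!
Following each vertex of `S` one step towards the center makes `S` a rooted tree with a parent
map `p`, and `v ↦ e_v` identifies `S'` with the graph on `S` in which `x` and `y` are adjacent when
they are adjacent in `T` or are distinct non-root siblings (`p x = p y`). In both graphs the depth
of a vertex is its distance to the root, so every root-fixing automorphism preserves depth. A tree
automorphism therefore commutes with `p` and preserves siblings; conversely, the tree edges are
exactly the edges of the second graph joining different depths. So the two graphs have the same
root-fixing automorphisms, and `D` only depends on those.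
-/

namespace RootedDistinguishing

variable {W W' : Type u}

section Counting

variable {H L : SimpleGraph W} {r : W}

def IsAut (H : SimpleGraph W) (σ : Equiv.Perm W) : Prop :=
  ∀ a b, H.Adj (σ a) (σ b) ↔ H.Adj a b

lemma IsAut.symm {σ : Equiv.Perm W} (hσ : IsAut H σ) : IsAut H σ.symm := fun a b => by
  simpa using (hσ (σ.symm a) (σ.symm b)).symm

lemma isRootedSB_iff_isAut {k : ℕ} (f : W → Fin k) :
    IsRootedSB H r f ↔
      ∀ σ : Equiv.Perm W, σ r = r → IsAut H σ → (∀ x, f (σ x) = f x) → ∀ x, σ x = x :=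
  ⟨fun h σ hr hσ => h ⟨σ, hσ _ _⟩ hr, fun h φ hr => h φ.toEquiv hr fun _ _ => φ.map_rel_iff⟩

lemma rootedSBRel_iff_isAut {k : ℕ} (f g : {f : W → Fin k // IsRootedSB H r f}) :
    rootedSBRel H r k f g ↔
      ∃ σ : Equiv.Perm W, σ r = r ∧ IsAut H σ ∧ ∀ x, f.1 x = g.1 (σ x) :=
  ⟨fun ⟨φ, hr, h⟩ => ⟨φ.toEquiv, hr, fun _ _ => φ.map_rel_iff, h⟩,
    fun ⟨σ, hr, hσ, h⟩ => ⟨⟨σ, hσ _ _⟩, hr, h⟩⟩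

lemma isAut_permCongr_iff {H' : SimpleGraph W'} (β : W ≃ W')
    (hL : ∀ a b, H'.Adj (β a) (β b) ↔ L.Adj a b) (σ : Equiv.Perm W) :
    IsAut H' (β.permCongr σ) ↔ IsAut L σ := by
  refine β.forall_congr_right.symm.trans <| forall_congr' fun a =>
    β.forall_congr_right.symm.trans <| forall_congr' fun b => ?_
  simp only [Equiv.permCongr_apply, Equiv.symm_apply_apply, hL]

theorem rootedSBCount_eq_of_equiv (H' : SimpleGraph W') (β : W ≃ W') (k : ℕ)
    (hL : ∀ a b, H'.Adj (β a) (β b) ↔ L.Adj a b)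
    (hAut : ∀ σ : Equiv.Perm W, σ r = r → (IsAut H σ ↔ IsAut L σ)) :
    rootedSBCount H r k = rootedSBCount H' (β r) k := by
  have hconj : ∀ σ : Equiv.Perm W, σ r = r → (IsAut H σ ↔ IsAut H' (β.permCongr σ)) :=
    fun σ hσ => (hAut σ hσ).trans (isAut_permCongr_iff β hL σ).symm
  have hsb : ∀ f : W → Fin k, IsRootedSB H r f ↔ IsRootedSB H' (β r) (f ∘ β.symm) := by
    intro f
    rw [isRootedSB_iff_isAut, isRootedSB_iff_isAut, ← β.permCongr.forall_congr_right]
    refine forall_congr' fun σ => ?_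
    simp only [Equiv.permCongr_apply, Equiv.symm_apply_apply, EmbeddingLike.apply_eq_iff_eq,
      Function.comp_apply]
    refine imp_congr_right fun hr => imp_congr (hconj σ hr) ?_
    simp only [← β.eq_symm_apply]
    exact imp_congr β.symm.forall_congr_right.symm β.symm.forall_congr_right.symm
  let c : {f : W → Fin k // IsRootedSB H r f} ≃ {g : W' → Fin k // IsRootedSB H' (β r) g} :=
    (β.arrowCongr (Equiv.refl _)).subtypeEquiv hsb
  refine Nat.card_congr (Quot.congr c fun f g => ?_)
  rw [rootedSBRel_iff_isAut, rootedSBRel_iff_isAut, ← β.permCongr.exists_congr_right]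
  refine exists_congr fun σ => ?_
  have hc : ∀ f y, (c f).1 y = f.1 (β.symm y) := fun _ _ => rfl
  simp only [hc, Equiv.permCongr_apply, Equiv.symm_apply_apply, EmbeddingLike.apply_eq_iff_eq]
  exact and_congr_right fun hr => and_congr (hconj σ hr) β.symm.forall_congr_right.symm

end Counting

section ParentFun

variable {G H : SimpleGraph W} {r : W} {p : W → W} {d : W → ℕ}

structure IsParentFun (H : SimpleGraph W) (r : W) (p : W → W) (d : W → ℕ) : Prop where
  adj : ∀ x, x ≠ r → H.Adj x (p x)
  level : ∀ x, x ≠ r → d x = d (p x) + 1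

lemma IsParentFun.mono (hp : IsParentFun G r p d) (hle : G ≤ H) : IsParentFun H r p d :=
  ⟨fun x hx => hle (hp.adj x hx), hp.level⟩

lemma IsParentFun.exists_walk (hp : IsParentFun H r p d) (x : W) :
    ∃ q : H.Walk x r, q.length + d r = d x := by
  induction hx : d x using Nat.strong_induction_on generalizing x with
  | _ n ih =>
    by_cases hxr : x = r
    · subst hxr
      exact ⟨.nil, by simp [hx]⟩
    · have hlt : d (p x) < n := by rw [← hx, hp.level x hxr]; omega
      obtain ⟨q, hq⟩ := ih _ hlt (p x) rfl
      exact ⟨.cons (hp.adj x hxr) q, by rw [Walk.length_cons, ← hx, hp.level x hxr]; omega⟩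

lemma level_le_length_add (hd : ∀ x y, H.Adj x y → d x ≤ d y + 1) {a b : W} (q : H.Walk a b) :
    d a ≤ q.length + d b := by
  induction q with
  | nil => simp
  | cons h q ih => have := hd _ _ h; rw [Walk.length_cons]; omega

lemma IsParentFun.level_le_of_isAut (hp : IsParentFun H r p d)
    (hd : ∀ x y, H.Adj x y → d x ≤ d y + 1) {σ : Equiv.Perm W} (hσr : σ r = r)
    (hσ : IsAut H σ) (x : W) : d (σ x) ≤ d x := by
  obtain ⟨q, hq⟩ := hp.exists_walk x
  have := level_le_length_add hd (q.map ⟨σ, (hσ _ _).2⟩)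
  rw [Walk.length_map] at this
  simp only [RelHom.coeFn_mk, hσr] at this
  omega

lemma IsParentFun.level_apply_of_isAut (hp : IsParentFun H r p d)
    (hd : ∀ x y, H.Adj x y → d x ≤ d y + 1) {σ : Equiv.Perm W} (hσr : σ r = r)
    (hσ : IsAut H σ) (x : W) : d (σ x) = d x := by
  refine le_antisymm (hp.level_le_of_isAut hd hσr hσ x) ?_
  simpa using hp.level_le_of_isAut hd (σ.symm_apply_eq.2 hσr.symm) hσ.symm (σ x)

lemma IsParentFun.adj_iff (hG : G.IsAcyclic) (hp : IsParentFun G r p d) {x y : W} :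
    G.Adj x y ↔ (x ≠ r ∧ p x = y) ∨ (y ≠ r ∧ p y = x) := by
  refine ⟨fun hxy => ?_, ?_⟩
  · by_contra! hne
    have hp' : IsParentFun (G.deleteEdges {s(x, y)}) r p d := by
      refine ⟨fun z hz => (deleteEdges_adj ..).2 ⟨hp.adj z hz, ?_⟩, hp.level⟩
      rw [Set.mem_singleton_iff, Sym2.eq_iff]
      rintro (⟨rfl, h⟩ | ⟨rfl, h⟩)
      exacts [hne.1 hz h, hne.2 hz h]
    obtain ⟨qx, -⟩ := hp'.exists_walk x
    obtain ⟨qy, -⟩ := hp'.exists_walk y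
    exact isBridge_iff.1 (isAcyclic_iff_forall_adj_isBridge.1 hG hxy) ⟨qx.append qy.reverse⟩
  · rintro (⟨hx, rfl⟩ | ⟨hy, rfl⟩)
    exacts [hp.adj x hx, (hp.adj y hy).symm]

lemma IsParentFun.level_of_adj (hG : G.IsAcyclic) (hp : IsParentFun G r p d) {x y : W}
    (hxy : G.Adj x y) : d x = d y + 1 ∨ d y = d x + 1 := by
  rcases (hp.adj_iff hG).1 hxy with ⟨hx, rfl⟩ | ⟨hy, rfl⟩
  exacts [.inl (hp.level x hx), .inr (hp.level y hy)]

/-- `G ⊔ siblingGraph r p` is the line graph of the tree `G` with a pendant edge attached at `r`,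
the vertex `x` standing for the edge from `x` to its parent. -/
def siblingGraph (r : W) (p : W → W) : SimpleGraph W where
  Adj x y := x ≠ y ∧ x ≠ r ∧ y ≠ r ∧ p x = p y
  symm := ⟨fun _ _ h => ⟨h.1.symm, h.2.2.1, h.2.1, h.2.2.2.symm⟩⟩
  loopless := ⟨fun _ h => h.1 rfl⟩

@[simp]
lemma siblingGraph_adj {x y : W} :
    (siblingGraph r p).Adj x y ↔ x ≠ y ∧ x ≠ r ∧ y ≠ r ∧ p x = p y := .rfl

lemma IsParentFun.level_of_siblingGraph_adj (hp : IsParentFun G r p d) {x y : W}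
    (hxy : (siblingGraph r p).Adj x y) : d x = d y := by
  obtain ⟨-, hx, hy, h⟩ := hxy
  rw [hp.level x hx, hp.level y hy, h]

lemma IsParentFun.adj_iff_sup_adj (hG : G.IsAcyclic) (hp : IsParentFun G r p d) {x y : W} :
    G.Adj x y ↔ (G ⊔ siblingGraph r p).Adj x y ∧ d x ≠ d y := by
  refine ⟨fun h => ⟨.inl h, ?_⟩, ?_⟩
  · rcases hp.level_of_adj hG h with h | h <;> omega
  · rintro ⟨h | h, hne⟩
    exacts [h, absurd (hp.level_of_siblingGraph_adj h) hne]

lemma IsParentFun.parent_apply_of_isAut (hG : G.IsAcyclic) (hp : IsParentFun G r p d)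
    {σ : Equiv.Perm W} (hσr : σ r = r) (hσ : IsAut G σ) {x : W} (hx : x ≠ r) :
    p (σ x) = σ (p x) := by
  have hd : ∀ x y, G.Adj x y → d x ≤ d y + 1 := fun x y h => by
    rcases hp.level_of_adj hG h with h | h <;> omega
  rcases (hp.adj_iff hG).1 ((hσ _ _).2 (hp.adj x hx)) with ⟨-, h⟩ | ⟨hpx, h⟩
  · exact h
  · have h₁ := hp.level _ hpx
    rw [h, hp.level_apply_of_isAut hd hσr hσ, hp.level_apply_of_isAut hd hσr hσ,
      hp.level x hx] at h₁
    omega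

theorem IsParentFun.isAut_iff_isAut_sup (hG : G.IsAcyclic) (hp : IsParentFun G r p d)
    {σ : Equiv.Perm W} (hσr : σ r = r) : IsAut G σ ↔ IsAut (G ⊔ siblingGraph r p) σ := by
  constructor
  · intro hσ a b
    have hne : ∀ a, σ a ≠ r ↔ a ≠ r := fun a => (σ.injective.eq_iff' hσr).not
    rw [sup_adj, sup_adj, hσ a b, siblingGraph_adj, siblingGraph_adj, σ.injective.ne_iff,
      hne a, hne b]
    refine or_congr_right <| and_congr_right fun _ => and_congr_right fun ha =>
      and_congr_right fun hb => ?_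
    rw [hp.parent_apply_of_isAut hG hσr hσ ha, hp.parent_apply_of_isAut hG hσr hσ hb,
      σ.injective.eq_iff]
  · intro hσ a b
    have hd : ∀ x y, (G ⊔ siblingGraph r p).Adj x y → d x ≤ d y + 1 := by
      rintro x y (h | h)
      · rcases hp.level_of_adj hG h with h | h <;> omega
      · exact (hp.level_of_siblingGraph_adj h).le.trans (Nat.le_succ _)
    have hlevel := (hp.mono le_sup_left).level_apply_of_isAut hd hσr hσ
    rw [hp.adj_iff_sup_adj hG, hp.adj_iff_sup_adj hG, hσ a b, hlevel, hlevel]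

end ParentFun

section Center

variable {V : Type u} {T : SimpleGraph V}

lemma centerSet_nonempty [Finite V] [Nonempty V] : (centerSet T).Nonempty :=
  let ⟨c, hc⟩ := Finite.exists_min (eccentricity T)
  ⟨c, hc⟩

lemma distToCenter_le_dist {c : V} (hc : c ∈ centerSet T) (v : V) :
    distToCenter T v ≤ T.dist v c :=
  Nat.sInf_le ⟨c, hc, rfl⟩

lemma exists_dist_eq_distToCenter (hne : (centerSet T).Nonempty) (v : V) :
    ∃ c ∈ centerSet T, T.dist v c = distToCenter T v :=
  Nat.sInf_mem (hne.image _)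

lemma distToCenter_le_of_adj (hT : T.Connected) (hne : (centerSet T).Nonempty) {x y : V}
    (hxy : T.Adj x y) : distToCenter T x ≤ distToCenter T y + 1 := by
  obtain ⟨c, hc, hyc⟩ := exists_dist_eq_distToCenter hne y
  calc distToCenter T x ≤ T.dist x c := distToCenter_le_dist hc x
    _ ≤ T.dist x y + T.dist y c := hT.dist_triangle
    _ = distToCenter T y + 1 := by rw [dist_eq_one_iff_adj.2 hxy, hyc, add_comm]

lemma mem_centerSet_of_distToCenter_eq_zero (hT : T.Connected) (hne : (centerSet T).Nonempty)
    {v : V} (hv : distToCenter T v = 0) : v ∈ centerSet T := by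
  obtain ⟨c, hc, hvc⟩ := exists_dist_eq_distToCenter hne v
  rwa [hT.dist_eq_zero_iff.1 (hvc.trans hv)]

end Center

/-! Here `o x` is the endpoint of `e_x` other than `x`: the parent of `x`, except at the root,
whose edge leads to the center, outside `S`. -/

section Planted

variable {V : Type u} {T : SimpleGraph V} {S : Set V} {r : S} {p : S → S} {d : S → ℕ} {o : S → V}

lemma upper_eq_iff (hpo : ∀ x, x ≠ r → o x = p x) (hor : o r ∉ S) {x y : S} :
    o x = y ↔ x ≠ r ∧ p x = y := by
  refine ⟨fun h => ?_, fun ⟨hx, h⟩ => (hpo x hx).trans (congrArg _ h)⟩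
  have hx : x ≠ r := by rintro rfl; exact hor (h ▸ y.2)
  exact ⟨hx, Subtype.ext ((hpo x hx).symm.trans h)⟩

lemma upper_eq_upper_iff (hpo : ∀ x, x ≠ r → o x = p x) (hor : o r ∉ S) {x y : S}
    (hxy : x ≠ y) : o x = o y ↔ x ≠ r ∧ y ≠ r ∧ p x = p y := by
  refine ⟨fun h => ?_, fun ⟨hx, hy, h⟩ => by rw [hpo x hx, hpo y hy, h]⟩
  have hne : ∀ {a b : S}, a ≠ b → o a = o b → a ≠ r := by
    rintro a b hab h rfl
    exact hor (h ▸ hpo b hab.symm ▸ (p b).2)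
  have hx := hne hxy h
  have hy := hne hxy.symm h.symm
  exact ⟨hx, hy, Subtype.ext (by rw [← hpo x hx, ← hpo y hy, h])⟩

variable {e : V → T.edgeSet}

lemma edge_injective (hp : IsParentFun (T.induce S) r p d) (hpo : ∀ x, x ≠ r → o x = p x)
    (hor : o r ∉ S) (he : ∀ x : S, (e x : Sym2 V) = s(↑x, o x)) :
    Function.Injective fun x : S => e x := by
  intro x y hxy
  have h := congrArg Subtype.val hxy
  simp only [he, Sym2.eq_iff] at h
  rcases h with ⟨h, -⟩ | ⟨hxo, hoy⟩
  · exact Subtype.ext h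
  · obtain ⟨hx, rfl⟩ := (upper_eq_iff hpo hor).1 hoy
    obtain ⟨hy, hpy⟩ := (upper_eq_iff hpo hor).1 hxo.symm
    have h₁ := hp.level x hx
    have h₂ := hp.level (p x) hy
    rw [hpy] at h₂
    omega

lemma lineGraph_adj_iff_siblingGraph (hG : (T.induce S).IsAcyclic)
    (hp : IsParentFun (T.induce S) r p d) (hpo : ∀ x, x ≠ r → o x = p x) (hor : o r ∉ S)
    (he : ∀ x : S, (e x : Sym2 V) = s(↑x, o x)) (x y : S) : T.lineGraph.Adj (e x) (e y) ↔ (T.induce S ⊔ siblingGraph r p).Adj x y := by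
  rw [lineGraph_adj_iff_exists, (edge_injective hp hpo hor he).ne_iff, he, he, sup_adj]
  simp only [Sym2.mem_iff]
  constructor
  · rintro ⟨hxy, v, rfl | rfl, hvy | hvy⟩
    · exact absurd (Subtype.ext hvy) hxy
    · exact .inl ((hp.adj_iff hG).2 (.inr ((upper_eq_iff hpo hor).1 hvy.symm)))
    · exact .inl ((hp.adj_iff hG).2 (.inl ((upper_eq_iff hpo hor).1 hvy)))
    · exact .inr ⟨hxy, (upper_eq_upper_iff hpo hor hxy).1 hvy⟩
  · rintro (h | h)
    · refine ⟨h.ne, ?_⟩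
      rcases (hp.adj_iff hG).1 h with ⟨hx, rfl⟩ | ⟨hy, rfl⟩
      · exact ⟨_, .inr (hpo x hx).symm, .inl rfl⟩
      · exact ⟨_, .inl rfl, .inr (hpo y hy).symm⟩
    · obtain ⟨hxy, hsib⟩ := h
      exact ⟨hxy, _, .inr rfl, .inr ((upper_eq_upper_iff hpo hor hxy).2 hsib)⟩

lemma exists_parentFun_of_component [Finite V] (hT : T.Connected)
    (he₁ : ∀ v : V, v ∉ centerSet T →
      ∃ p : V, T.Adj v p ∧ distToCenter T p < distToCenter T v ∧ (e v : Sym2 V) = s(v, p))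
    (hSC : S ∩ centerSet T = ∅)
    (hSclosed : ∀ a ∈ S, ∀ b : V, b ∉ centerSet T → T.Adj a b → b ∈ S)
    {v₀ : V} (hv₀ : v₀ ∈ S) (hv₀adj : ∃ c ∈ centerSet T, T.Adj v₀ c)
    (hv₀uniq : ∀ x ∈ S, (∃ c ∈ centerSet T, T.Adj x c) → x = v₀) :
    ∃ (p : S → S) (o : S → V),
      IsParentFun (T.induce S) ⟨v₀, hv₀⟩ p (fun x => distToCenter T x) ∧
      (∀ x, x ≠ ⟨v₀, hv₀⟩ → o x = p x) ∧ o ⟨v₀, hv₀⟩ ∉ S ∧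
      ∀ x : S, (e x : Sym2 V) = s(↑x, o x) := by
  classical
  have : Nonempty V := ⟨v₀⟩
  have hne : (centerSet T).Nonempty := centerSet_nonempty
  have hSC' : ∀ x ∈ S, x ∉ centerSet T := fun x hx hc => hSC.subset ⟨hx, hc⟩
  choose o hadj hlt he using fun x : S => he₁ x (hSC' x x.2)
  have hlevel : ∀ x : S, distToCenter T x = distToCenter T (o x) + 1 := fun x =>
    le_antisymm (distToCenter_le_of_adj hT hne (hadj x)) (hlt x)
  have hoS : ∀ x : S, x ≠ ⟨v₀, hv₀⟩ → o x ∈ S := fun x hx =>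
    hSclosed x x.2 (o x) (fun hc => hx (Subtype.ext (hv₀uniq x x.2 ⟨o x, hc, hadj x⟩))) (hadj x)
  have hor : o ⟨v₀, hv₀⟩ ∉ S := by
    obtain ⟨c, hc, hv₀c⟩ := hv₀adj
    have h₁ := distToCenter_le_dist hc v₀
    have h₂ := hlevel ⟨v₀, hv₀⟩
    rw [dist_eq_one_iff_adj.2 hv₀c] at h₁
    dsimp only at h₂
    exact fun h => hSC' _ h (mem_centerSet_of_distToCenter_eq_zero hT hne (by omega))
  refine ⟨fun x => if hx : x = ⟨v₀, hv₀⟩ then x else ⟨o x, hoS x hx⟩, o,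
    ⟨fun x hx => ?_, fun x hx => ?_⟩, fun x hx => by simp [hx], hor, he⟩
  · simpa [hx] using hadj x
  · simpa [hx] using hlevel x

end Planted

end RootedDistinguishing

open RootedDistinguishing

theorem rootedSBCount_component_eq_lineGraph_general {V : Type u} [Fintype V]
    (T : SimpleGraph V) (hT : T.IsTree)
    -- `e` is the association `v ↦ e_v` of edges to non-central (and central-edge) vertices:
    (e : V → T.edgeSet)
    (he₁ : ∀ v : V, v ∉ centerSet T →
      ∃ p : V, T.Adj v p ∧ distToCenter T p < distToCenter T v ∧ (e v : Sym2 V) = s(v, p))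
    -- `S` is a connected component of `T − C(T)`:
    (S : Set V)
    (hSC : S ∩ centerSet T = ∅)
    (hSclosed : ∀ a ∈ S, ∀ b : V, b ∉ centerSet T → T.Adj a b → b ∈ S)
    -- `v₀` is the unique vertex of `S` adjacent to the center:
    (v₀ : V) (hv₀ : v₀ ∈ S)
    (hv₀adj : ∃ c ∈ centerSet T, T.Adj v₀ c)
    (hv₀uniq : ∀ x ∈ S, (∃ c ∈ centerSet T, T.Adj x c) → x = v₀) :
    ∀ k : ℕ, 1 ≤ k →
      rootedSBCount (T.induce S) ⟨v₀, hv₀⟩ k =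
        rootedSBCount (T.lineGraph.induce (e '' S)) ⟨e v₀, Set.mem_image_of_mem e hv₀⟩ k := by
  intro k _
  obtain ⟨p, o, hp, hpo, hor, he⟩ :=
    exists_parentFun_of_component hT.connected he₁ hSC hSclosed hv₀ hv₀adj hv₀uniq
  have hG := hT.isAcyclic.induce S
  have hinj : Set.InjOn e S := Set.injOn_iff_injective.2 (edge_injective hp hpo hor he)
  exact rootedSBCount_eq_of_equiv _ (Equiv.Set.imageOfInjOn e S hinj) k
    (lineGraph_adj_iff_siblingGraph hG hp hpo hor he) fun σ hσ => hp.isAut_iff_isAut_sup hG hσ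

/-- Let `T` be a finite tree with at least 3 vertices, let `S = S_i` be a connected component
of `T − C(T)` with `v₀ = v_i` its unique vertex adjacent to the center, and let `S' = S'_i` be
the subgraph of `L(T)` induced on `{e_v : v ∈ S}`, where for a non-central vertex `v`, `e_v` is
the first edge of the unique path from `v` to the center (and `e_u = e_w = {u,w}` when
`C(T) = {u,w}` is an edge).  Then for every `k ≥ 1`, `D(S;k) = D(S';k)`, the rooted
distinguishing counts with respective roots `v₀` and `e_{v₀}`. -/
theorem rootedSBCount_component_eq_lineGraph {V : Type u} [Fintype V]
    (T : SimpleGraph V) (hT : T.IsTree) (hcard : 3 ≤ Fintype.card V)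
    -- `e` is the association `v ↦ e_v` of edges to non-central (and central-edge) vertices:
    (e : V → T.edgeSet)
    (he₁ : ∀ v : V, v ∉ centerSet T →
      ∃ p : V, T.Adj v p ∧ distToCenter T p < distToCenter T v ∧ (e v : Sym2 V) = s(v, p))
    (he₂ : ∀ u w : V, u ≠ w → centerSet T = {u, w} →
      (e u : Sym2 V) = s(u, w) ∧ (e w : Sym2 V) = s(u, w))
    -- `S` is a connected component of `T − C(T)`:
    (S : Set V)
    (hSC : S ∩ centerSet T = ∅)
    (hSconn : (T.induce S).Connected)
    (hSclosed : ∀ a ∈ S, ∀ b : V, b ∉ centerSet T → T.Adj a b → b ∈ S)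
    -- `v₀` is the unique vertex of `S` adjacent to the center:
    (v₀ : V) (hv₀ : v₀ ∈ S)
    (hv₀adj : ∃ c ∈ centerSet T, T.Adj v₀ c)
    (hv₀uniq : ∀ x ∈ S, (∃ c ∈ centerSet T, T.Adj x c) → x = v₀) :
    ∀ k : ℕ, 1 ≤ k →
      rootedSBCount (T.induce S) ⟨v₀, hv₀⟩ k =
        rootedSBCount (T.lineGraph.induce (e '' S)) ⟨e v₀, Set.mem_image_of_mem e hv₀⟩ k :=
  rootedSBCount_component_eq_lineGraph_general T hT e he₁ S hSC hSclosed v₀ hv₀ hv₀adj hv₀uniq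
end

section
/- For n > 1, let T be the double star obtained by taking a single edge {u,w} and appending n pendant leaves to u and n pendant leaves to w. Then T has no optimal distinguishing coloring in which the two center vertices receive the same color, and D(L(T)) = D(T) + 1. -/
open SimpleGraph

universe u

/-- A coloring `f : V(G) → {1,…,k}` distinguishes `G` if the only automorphism of `G`
preserving the coloring is the identity. -/
def Distinguishes {V : Type u} (G : SimpleGraph V) {k : ℕ} (f : V → Fin k) : Prop :=
  ∀ φ : G ≃g G, (∀ v, f (φ v) = f v) → ∀ v, φ v = v

/-- The distinguishing number `D(G)`: the least `k` such that some `k`-coloring of the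
vertices distinguishes `G`. -/
noncomputable def distinguishingNumber {V : Type u} (G : SimpleGraph V) : ℕ :=
  sInf {k : ℕ | ∃ f : V → Fin k, Distinguishes G f}

/-- The double star: a single central edge `{u, w}` (with `u = inl 0`, `w = inl 1`) together
with `n` pendant leaves `inr (0, j)` attached to `u` and `n` pendant leaves `inr (1, j)`
attached to `w`. -/
def doubleStar (n : ℕ) : SimpleGraph (Fin 2 ⊕ Fin 2 × Fin n) :=
  SimpleGraph.fromRel (fun a b =>
    (a = Sum.inl 0 ∧ b = Sum.inl 1) ∨ ∃ i j, a = Sum.inl i ∧ b = Sum.inr (i, j))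

/-!
Leaves at the same centre of `T` are twins, and so are the pendant edges at the same centre in
`L(T)`; a distinguishing colouring separates twins, so it is injective on each side. With only
`n` colours each side then uses every colour, and matching leaves of equal colour gives an
automorphism exchanging the two sides and preserving all leaf colours. It preserves the colours of
the centres when these agree in `T`, and always in `L(T)`, where the centre edge is fixed. This
gives `D(T) ≥ n`, `D(L(T)) ≥ n + 1`, and the first claim. Explicit colourings give the matching
upper bounds: in `L(T)` the centre edge is the only vertex adjacent to all others, hence fixed by
every automorphism, and colouring the leaf edge `(i, j)` by `j + i` keeps the sides apart.
-/

open Function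

section General

variable {V : Type*} {G : SimpleGraph V}

lemma distinguishingNumber_eq_of_distinguishes {k : ℕ} {f : V → Fin k} (hf : Distinguishes G f)
    (hmin : ∀ m (g : V → Fin m), Distinguishes G g → k ≤ m) : distinguishingNumber G = k :=
  le_antisymm (Nat.sInf_le ⟨f, hf⟩) (le_csInf ⟨k, f, hf⟩ fun _ ⟨g, hg⟩ => hmin _ g hg)

lemma SimpleGraph.Iso.apply_eq_self_of_unique_universal (φ : G ≃g G) {x : V}
    (hx : ∀ y, y ≠ x → G.Adj x y) (huniq : ∀ z, (∀ y, y ≠ z → G.Adj z y) → z = x) :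
    φ x = x := by
  refine huniq _ fun y hy => ?_
  have hy' : φ.symm y ≠ x := fun h => hy (by rw [← h, RelIso.apply_symm_apply])
  simpa using φ.map_adj_iff.mpr (hx _ hy')

def SimpleGraph.swapTwins [DecidableEq V] (G : SimpleGraph V) {x y : V}
    (h : ∀ z, z ≠ x → z ≠ y → (G.Adj x z ↔ G.Adj y z)) : G ≃g G where
  toEquiv := Equiv.swap x y
  map_rel_iff' {a b} := by
    have h' : ∀ z, z ≠ x → z ≠ y → (G.Adj z x ↔ G.Adj z y) := fun z hx hy => by
      simpa only [G.adj_comm z] using h z hx hy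
    simp only [Equiv.swap_apply_def]
    split_ifs <;> subst_vars <;> simp_all [G.adj_comm b]

lemma Distinguishes.apply_ne_of_twins {k : ℕ} {f : V → Fin k} (hf : Distinguishes G f)
    {x y : V} (hxy : x ≠ y) (h : ∀ z, z ≠ x → z ≠ y → (G.Adj x z ↔ G.Adj y z)) : f x ≠ f y := by
  classical
  intro hfxy
  have hfix := hf (G.swapTwins h) (fun v => ?_) x
  · exact hxy (hfix.symm.trans (Equiv.swap_apply_left x y))
  · show f (Equiv.swap x y v) = f v
    rw [Equiv.swap_apply_def]
    split_ifs <;> simp_all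

end General

lemma exists_prodShear_comp_eq {α β γ : Type*} (σ : Equiv.Perm α) (c : α × β → γ)
    (hc : ∀ a, Bijective fun b => c (a, b)) :
    ∃ τ : α → Equiv.Perm β, ∀ p, c (Equiv.prodShear σ τ p) = c p := by
  let e a := Equiv.ofBijective _ (hc a)
  refine ⟨fun a => (e a).trans (e (σ a)).symm, fun p => ?_⟩
  exact (e (σ p.1)).apply_symm_apply (e p.1 p.2)

namespace doubleStar

variable {n : ℕ}

@[simp] lemma adj_inl_inl {i i' : Fin 2} :
    (doubleStar n).Adj (.inl i) (.inl i') ↔ i ≠ i' := by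
  fin_cases i <;> fin_cases i' <;> simp [doubleStar]

@[simp] lemma adj_inl_inr {i : Fin 2} {p : Fin 2 × Fin n} :
    (doubleStar n).Adj (.inl i) (.inr p) ↔ i = p.1 := by
  obtain ⟨i', j⟩ := p
  fin_cases i <;> fin_cases i' <;> simp [doubleStar]

@[simp] lemma adj_inr_inl {i : Fin 2} {p : Fin 2 × Fin n} :
    (doubleStar n).Adj (.inr p) (.inl i) ↔ i = p.1 := by
  rw [adj_comm, adj_inl_inr]

@[simp] lemma not_adj_inr_inr {p q : Fin 2 × Fin n} : ¬ (doubleStar n).Adj (.inr p) (.inr q) := by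
  simp [doubleStar]

lemma eq_inl_of_adj_inr {p : Fin 2 × Fin n} {v : Fin 2 ⊕ Fin 2 × Fin n}
    (h : (doubleStar n).Adj (.inr p) v) : v = .inl p.1 := by
  rcases v with i | q
  · rw [adj_inr_inl.mp h]
  · exact absurd h not_adj_inr_inr

def swapSides (τ : Fin 2 → Equiv.Perm (Fin n)) : doubleStar n ≃g doubleStar n where
  toEquiv := Equiv.sumCongr (Equiv.swap 0 1) (Equiv.prodShear (Equiv.swap 0 1) τ)
  map_rel_iff' {a b} := by
    rcases a with i | ⟨i, j⟩ <;> rcases b with i' | ⟨i', j'⟩ <;>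
      simp [(Equiv.swap (0 : Fin 2) 1).injective.eq_iff]

@[simp] lemma swapSides_inl (τ : Fin 2 → Equiv.Perm (Fin n)) (i : Fin 2) :
    swapSides τ (.inl i) = .inl (Equiv.swap 0 1 i) := rfl

@[simp] lemma swapSides_inr (τ : Fin 2 → Equiv.Perm (Fin n)) (p : Fin 2 × Fin n) :
    swapSides τ (.inr p) = .inr (Equiv.prodShear (Equiv.swap 0 1) τ p) := rfl

lemma leaves_twins (i : Fin 2) (j j' : Fin n) (v : Fin 2 ⊕ Fin 2 × Fin n) :
    v ≠ .inr (i, j) → v ≠ .inr (i, j') →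
      ((doubleStar n).Adj (.inr (i, j)) v ↔ (doubleStar n).Adj (.inr (i, j')) v) := by
  rcases v with k | q <;> simp

lemma _root_.Distinguishes.injective_leafColors {k : ℕ} {f : Fin 2 ⊕ Fin 2 × Fin n → Fin k}
    (hf : Distinguishes (doubleStar n) f) (i : Fin 2) : Injective fun j => f (.inr (i, j)) :=
  fun j j' h => by_contra fun hne =>
    hf.apply_ne_of_twins (by simpa using hne) (leaves_twins i j j') h

lemma _root_.Distinguishes.le_of_doubleStar {k : ℕ} {f : Fin 2 ⊕ Fin 2 × Fin n → Fin k}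
    (hf : Distinguishes (doubleStar n) f) : n ≤ k := by
  simpa using Fintype.card_le_of_injective _ (hf.injective_leafColors 0)

lemma _root_.Distinguishes.apply_inl_zero_ne_apply_inl_one {f : Fin 2 ⊕ Fin 2 × Fin n → Fin n}
    (hf : Distinguishes (doubleStar n) f) : f (.inl 0) ≠ f (.inl 1) := by
  intro hcenter
  obtain ⟨τ, hτ⟩ := exists_prodShear_comp_eq (Equiv.swap 0 1) (fun p => f (.inr p))
    fun i => Finite.injective_iff_bijective.mp (hf.injective_leafColors i)
  have hmoved := hf (swapSides τ) ?_ (.inl 0)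
  · simp at hmoved
  · rintro (i | p)
    · fin_cases i
      exacts [hcenter.symm, hcenter]
    · exact hτ p

lemma Iso.exists_apply_inl (hn : 0 < n) (φ : doubleStar n ≃g doubleStar n) (i : Fin 2) :
    ∃ i', φ (.inl i) = .inl i' := by
  rcases hφ : φ (.inl i) with i' | q
  · exact ⟨i', rfl⟩
  · have hne : i ≠ i.rev := by fin_cases i <;> decide
    have hcenter := φ.map_adj_iff.mpr (adj_inl_inl.mpr hne)
    have hleaf := φ.map_adj_iff.mpr (adj_inl_inr.mpr rfl : (doubleStar n).Adj _ (.inr (i, ⟨0, hn⟩)))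
    rw [hφ] at hcenter hleaf
    simpa using φ.injective ((eq_inl_of_adj_inr hcenter).trans (eq_inl_of_adj_inr hleaf).symm)

def centerLeafColoring (hn : 2 ≤ n) : Fin 2 ⊕ Fin 2 × Fin n → Fin n :=
  Sum.elim (Fin.castLE hn) Prod.snd

lemma distinguishes_centerLeafColoring (hn : 2 ≤ n) :
    Distinguishes (doubleStar n) (centerLeafColoring hn) := by
  intro φ hφ
  have hinl : ∀ i, φ (.inl i) = .inl i := fun i => by
    obtain ⟨i', hi'⟩ := Iso.exists_apply_inl (by omega) φ i
    have := hφ (.inl i)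
    rw [hi'] at this ⊢
    simpa [centerLeafColoring, Fin.castLE_inj] using this
  rintro (i | ⟨i, j⟩)
  · exact hinl i
  · have hadj := φ.map_adj_iff.mpr (adj_inr_inl.mpr rfl : (doubleStar n).Adj (.inr (i, j)) _)
    rw [hinl i] at hadj
    rcases hv : φ (.inr (i, j)) with i' | ⟨i', j'⟩
    · simpa using φ.injective (hv.trans (hinl i').symm)
    · have hcol := hφ (.inr (i, j))
      rw [hv] at hadj hcol
      simp_all [centerLeafColoring]

lemma distinguishingNumber_eq (hn : 2 ≤ n) : distinguishingNumber (doubleStar n) = n :=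
  distinguishingNumber_eq_of_distinguishes (distinguishes_centerLeafColoring hn)
    fun _ _ hg => hg.le_of_doubleStar

def centerEdge : (doubleStar n).edgeSet := ⟨s(.inl 0, .inl 1), by simp⟩

def leafEdge (p : Fin 2 × Fin n) : (doubleStar n).edgeSet := ⟨s(.inl p.1, .inr p), by simp⟩

lemma leafEdge_injective : Injective (leafEdge (n := n)) := by
  intro p q h
  simp only [leafEdge, Subtype.mk.injEq, Sym2.eq_iff] at h
  grind

@[simp] lemma leafEdge_inj {p q : Fin 2 × Fin n} : leafEdge p = leafEdge q ↔ p = q :=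
  leafEdge_injective.eq_iff

@[simp] lemma leafEdge_ne_centerEdge (p : Fin 2 × Fin n) : leafEdge p ≠ centerEdge := by
  simp [leafEdge, centerEdge, Subtype.ext_iff]

lemma edge_cases (e : (doubleStar n).edgeSet) : e = centerEdge ∨ ∃ p, e = leafEdge p := by
  obtain ⟨e, he⟩ := e
  induction e with | _ a b => ?_
  rw [mem_edgeSet] at he
  rcases a with i | p <;> rcases b with i' | q
  · left
    fin_cases i <;> fin_cases i' <;> simp_all [centerEdge, Sym2.eq_swap]
  · exact .inr ⟨q, by simp_all [leafEdge]⟩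
  · exact .inr ⟨p, by simp_all [leafEdge, Sym2.eq_swap]⟩
  · exact absurd he not_adj_inr_inr

lemma lineGraph_adj_centerEdge_leafEdge (p : Fin 2 × Fin n) :
    (doubleStar n).lineGraph.Adj centerEdge (leafEdge p) := by
  rw [lineGraph_adj_iff_exists]
  refine ⟨(leafEdge_ne_centerEdge p).symm, .inl p.1, ?_, by simp [leafEdge]⟩
  obtain ⟨i, j⟩ := p
  fin_cases i <;> simp [centerEdge]

@[simp] lemma lineGraph_adj_leafEdge {p q : Fin 2 × Fin n} :
    (doubleStar n).lineGraph.Adj (leafEdge p) (leafEdge q) ↔ p ≠ q ∧ p.1 = q.1 := by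
  rw [lineGraph_adj_iff_exists, ne_eq, leafEdge_inj]
  simp only [leafEdge, Sym2.mem_iff]
  constructor
  · rintro ⟨hne, v, rfl | rfl, h | h⟩ <;> simp_all
  · rintro ⟨hne, h⟩
    exact ⟨hne, .inl p.1, .inl rfl, .inl (congrArg _ h)⟩

lemma swapSides_lineGraph_centerEdge (τ : Fin 2 → Equiv.Perm (Fin n)) :
    (swapSides τ).lineGraph centerEdge = centerEdge :=
  Subtype.ext (by simp [Iso.lineGraph, Copy.lineGraph, Copy.toLineGraphEmbedding, centerEdge])

lemma swapSides_lineGraph_leafEdge (τ : Fin 2 → Equiv.Perm (Fin n)) (p : Fin 2 × Fin n) :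
    (swapSides τ).lineGraph (leafEdge p) = leafEdge (Equiv.prodShear (Equiv.swap 0 1) τ p) :=
  Subtype.ext (by simp [Iso.lineGraph, Copy.lineGraph, Copy.toLineGraphEmbedding, leafEdge])

lemma leafEdges_twins (i : Fin 2) (j j' : Fin n) (e : (doubleStar n).edgeSet) :
    e ≠ leafEdge (i, j) → e ≠ leafEdge (i, j') →
      ((doubleStar n).lineGraph.Adj (leafEdge (i, j)) e ↔
        (doubleStar n).lineGraph.Adj (leafEdge (i, j')) e) := by
  rcases edge_cases e with rfl | ⟨q, rfl⟩
  · simp [(lineGraph_adj_centerEdge_leafEdge _).symm]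
  · simp +contextual [eq_comm]

lemma _root_.Distinguishes.injective_leafEdgeColors {k : ℕ} {f : (doubleStar n).edgeSet → Fin k}
    (hf : Distinguishes (doubleStar n).lineGraph f) (i : Fin 2) :
    Injective fun j => f (leafEdge (i, j)) :=
  fun j j' h => by_contra fun hne =>
    hf.apply_ne_of_twins (by simpa using hne) (leafEdges_twins i j j') h

lemma _root_.Distinguishes.lt_of_lineGraph_doubleStar {k : ℕ}
    {f : (doubleStar n).edgeSet → Fin k} (hf : Distinguishes (doubleStar n).lineGraph f) :
    n < k := by
  have hle : n ≤ k := by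
    simpa using Fintype.card_le_of_injective _ (hf.injective_leafEdgeColors 0)
  refine hle.lt_of_ne ?_
  rintro rfl
  obtain ⟨τ, hτ⟩ := exists_prodShear_comp_eq (Equiv.swap 0 1) (fun p => f (leafEdge p))
    fun i => Finite.injective_iff_bijective.mp (hf.injective_leafEdgeColors i)
  -- `f centerEdge : Fin n` serves as a leaf index, since now `k = n`
  have hmoved := hf (swapSides τ).lineGraph ?_ (leafEdge (0, f centerEdge))
  · simp [swapSides_lineGraph_leafEdge] at hmoved
  · intro e
    rcases edge_cases e with rfl | ⟨p, rfl⟩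
    · rw [swapSides_lineGraph_centerEdge]
    · rw [swapSides_lineGraph_leafEdge, hτ]

lemma lineGraph_adj_centerEdge {e : (doubleStar n).edgeSet} (he : e ≠ centerEdge) :
    (doubleStar n).lineGraph.Adj centerEdge e := by
  obtain ⟨p, rfl⟩ := (edge_cases e).resolve_left he
  exact lineGraph_adj_centerEdge_leafEdge p

lemma eq_centerEdge_of_forall_lineGraph_adj (hn : 0 < n) {e : (doubleStar n).edgeSet}
    (h : ∀ e', e' ≠ e → (doubleStar n).lineGraph.Adj e e') : e = centerEdge := by
  refine (edge_cases e).resolve_right ?_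
  rintro ⟨⟨i, j⟩, rfl⟩
  have hne : i ≠ i.rev := by fin_cases i <;> decide
  simpa [hne] using h (leafEdge (i.rev, ⟨0, hn⟩)) (by simp [hne.symm])

/-- An edge is coloured by the sum of the weights of its ends, so that the leaf edge `(i, j)` gets
colour `j + i` and the centre edge colour `0`. -/
def edgeColoring : (doubleStar n).edgeSet → Fin (n + 1) :=
  let weight : Fin 2 ⊕ Fin 2 × Fin n → Fin (n + 1) :=
    Sum.elim 0 fun p => ⟨p.2 + p.1, by omega⟩
  fun e => Sym2.lift ⟨fun a b => weight a + weight b, fun _ _ => add_comm _ _⟩ e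

@[simp] lemma val_edgeColoring_leafEdge (p : Fin 2 × Fin n) :
    (edgeColoring (leafEdge p) : ℕ) = p.2 + p.1 := by
  simp [edgeColoring, leafEdge]

lemma distinguishes_edgeColoring (hn : 0 < n) :
    Distinguishes (doubleStar n).lineGraph edgeColoring := by
  intro ψ hψ
  have hcenter : ψ centerEdge = centerEdge :=
    ψ.apply_eq_self_of_unique_universal (fun _ => lineGraph_adj_centerEdge)
      fun _ => eq_centerEdge_of_forall_lineGraph_adj hn
  have hleaf : ∀ p, ∃ q, ψ (leafEdge p) = leafEdge q := fun p =>
    (edge_cases _).resolve_left fun h =>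
      leafEdge_ne_centerEdge p (ψ.injective (h.trans hcenter.symm))
  choose π hπ using hleaf
  have hcol : ∀ p, ((π p).2 + (π p).1 : ℕ) = p.2 + p.1 := fun p => by
    simpa [hπ, Fin.ext_iff] using hψ (leafEdge p)
  have hside : ∀ p q, p.1 = q.1 → (π p).1 = (π q).1 := by
    intro p q h
    by_cases hpq : p = q
    · rw [hpq]
    · have hadj := ψ.map_adj_iff.mpr (lineGraph_adj_leafEdge.mpr ⟨hpq, h⟩)
      rw [hπ, hπ, lineGraph_adj_leafEdge] at hadj
      exact hadj.2
  -- colour `0` occurs only at the leaf edge `(0, 0)` and colour `n` only at `(1, n - 1)`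
  have h0 : (π (0, ⟨0, hn⟩)).1 = 0 := by
    have := hcol (0, ⟨0, hn⟩)
    ext; simp only [Fin.val_zero] at this ⊢; omega
  have h1 : (π (1, ⟨n - 1, by omega⟩)).1 = 1 := by
    have := hcol (1, ⟨n - 1, by omega⟩)
    have := (π (1, ⟨n - 1, by omega⟩)).2.isLt
    ext; simp only [Fin.val_one] at *; omega
  have hπ_fst : ∀ p, (π p).1 = p.1 := by
    rintro ⟨i, j⟩
    fin_cases i
    · exact (hside (0, j) (0, ⟨0, hn⟩) rfl).trans h0
    · exact (hside (1, j) (1, ⟨n - 1, by omega⟩) rfl).trans h1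
  intro e
  obtain rfl | ⟨p, rfl⟩ := edge_cases e
  · exact hcenter
  · rw [hπ, leafEdge_inj]
    have hsum := hcol p
    have hfst := congrArg Fin.val (hπ_fst p)
    exact Prod.ext (hπ_fst p) (Fin.ext (by omega))

lemma distinguishingNumber_lineGraph (hn : 0 < n) :
    distinguishingNumber (doubleStar n).lineGraph = n + 1 :=
  distinguishingNumber_eq_of_distinguishes (distinguishes_edgeColoring hn)
    fun _ _ hg => hg.lt_of_lineGraph_doubleStar

end doubleStar

/-- For `n > 1`, the double star `T` with center edge `{u, w}` and `n` leaves appended to each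
of `u` and `w` has no optimal distinguishing coloring in which the two center vertices receive
the same color, and `D(L(T)) = D(T) + 1`. -/
theorem doubleStar_lineGraph_distinguishingNumber (n : ℕ) (hn : 1 < n) :
    (¬ ∃ f : (Fin 2 ⊕ Fin 2 × Fin n) → Fin (distinguishingNumber (doubleStar n)),
        Distinguishes (doubleStar n) f ∧ f (Sum.inl 0) = f (Sum.inl 1)) ∧
      distinguishingNumber (doubleStar n).lineGraph = distinguishingNumber (doubleStar n) + 1 := by
  rw [doubleStar.distinguishingNumber_lineGraph (by omega), doubleStar.distinguishingNumber_eq hn]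
  exact ⟨fun ⟨_, hf, hcenter⟩ => hf.apply_inl_zero_ne_apply_inl_one hcenter, rfl⟩
end

section
/- Let G be a finite graph and {P_1,…,P_k} a partition of V(G) such that every automorphism φ of G permutes the parts, i.e., there is π ∈ S_k with φ(P_i) = P_{π(i)} for all i, and such that the induced homomorphism from Aut(G) to S_k is injective (with image H ≤ S_k). Suppose moreover that whenever P_i has a trivial H-orbit, every automorphism of G restricts to the identity on P_i. Let Tr = {i : P_i has a nontrivial H-orbit}, let r = min_{i ∈ Tr} |P_i|, and let m be the least integer with binom(r + m − 1, m − 1) ≥ k. Then D(G) ≤ m. -/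
open SimpleGraph

universe u

/-- Let `G` be a finite graph and `P₁, …, P_k` a partition of `V(G)` such that every
automorphism of `G` permutes the parts and the induced homomorphism `Aut(G) → S_k` is
injective.  Suppose that whenever a part `P i` has a trivial orbit (every automorphism fixes
it setwise), every automorphism restricts to the identity on `P i`.  Let `Tr` be the set of
indices of parts with nontrivial orbit, `r` the minimum size of such a part, and `m` the least
(positive) integer with `binom (r + m - 1) (m - 1) ≥ k`.  Then `D(G) ≤ m`. -/
theorem distinguishingNumber_le_of_part_permuting {V : Type u} [Fintype V]
    (G : SimpleGraph V) (k : ℕ) (P : Fin k → Set V)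
    -- `P` is a partition of `V(G)`:
    (hdisj : ∀ i j, i ≠ j → Disjoint (P i) (P j))
    (hcover : ∀ v : V, ∃ i, v ∈ P i)
    (hne : ∀ i, (P i).Nonempty)
    -- every automorphism permutes the parts:
    (hperm : ∀ φ : G ≃g G, ∃ π : Equiv.Perm (Fin k), ∀ i, ⇑φ '' P i = P (π i))
    -- the induced homomorphism `Aut(G) → S_k` is injective:
    (hinj : ∀ φ : G ≃g G, (∀ i, ⇑φ '' P i = P i) → ∀ v, φ v = v)
    -- parts with a trivial orbit are fixed pointwise by every automorphism:
    (htriv : ∀ i, (∀ φ : G ≃g G, ⇑φ '' P i = P i) →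
      ∀ φ : G ≃g G, ∀ v ∈ P i, φ v = v)
    -- `r` is the least size of a part with nontrivial orbit:
    (r : ℕ)
    (hr : r = sInf ((fun i => (P i).ncard) ''
      {i : Fin k | ¬ ∀ φ : G ≃g G, ⇑φ '' P i = P i}))
    -- `m` is the least positive integer with `binom (r + m - 1) (m - 1) ≥ k`:
    (m : ℕ) (hm1 : 1 ≤ m)
    (hmge : k ≤ (r + m - 1).choose (m - 1))
    (hmleast : ∀ m', 1 ≤ m' → m' < m → (r + m' - 1).choose (m' - 1) < k) :
    distinguishingNumber G ≤ m := by
  classical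
  -- an injection from indices into multisets of size `r` over `Fin m`
  have hcard : k ≤ Fintype.card (Sym (Fin m) r) := by
    rw [Sym.card_sym_eq_multichoose, Nat.multichoose_eq, Fintype.card_fin]
    have h1 : m + r - 1 = r + m - 1 := by omega
    have h2 : (r + m - 1) - (m - 1) = r := by omega
    have h3 := Nat.choose_symm (n := r + m - 1) (k := m - 1) (by omega)
    rw [h2] at h3
    rw [h1, h3]
    exact hmge
  obtain ⟨ι⟩ : Nonempty (Fin k ↪ Sym (Fin m) r) := by
    rw [← Fintype.card_fin k] at hcard
    exact Function.Embedding.nonempty_of_card_le hcard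
  set n : Fin k → ℕ := fun i => (P i).ncard with hn
  have hfc : ∀ i, Fintype.card (P i) = n i := by
    intro i
    rw [hn, ← Set.toFinset_card, ← Set.ncard_eq_toFinset_card']
  let e : (i : Fin k) → (P i) ≃ Fin (n i) := fun i => Fintype.equivFinOfCardEq (hfc i)
  let z : Fin m := ⟨0, hm1⟩
  let pad : Fin k → Multiset (Fin m) := fun i =>
    (ι i : Multiset (Fin m)) + Multiset.replicate (n i - r) z
  choose idx hidx using hcover
  have idx_eq : ∀ {i : Fin k} {v : V}, v ∈ P i → idx v = i := by
    intro i v hv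
    by_contra h
    exact Set.disjoint_left.mp (hdisj _ _ h) (hidx v) hv
  let f : V → Fin m := fun v => (pad (idx v)).toList.getD ((e (idx v)) ⟨v, hidx v⟩).val z
  have fA : ∀ (i : Fin k) (v : V) (hv : v ∈ P i),
      f v = (pad i).toList.getD ((e i) ⟨v, hv⟩).val z := by
    intro i v hv
    have h := idx_eq hv
    subst h
    rfl
  -- the multiset of colors appearing on a part
  let colM : Fin k → Multiset (Fin m) := fun i =>
    (Finset.univ.val : Multiset (P i)).map (fun x => f x.1)
  have hlist : ∀ (L : List (Fin m)) (nn : ℕ), L.length = nn →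
      List.ofFn (fun t : Fin nn => L.getD t.val z) = L := by
    intro L nn hL
    subst hL
    apply List.ext_getElem (by simp)
    intro j h1 h2
    simp [List.getD_eq_getElem]
  have hB : ∀ i, r ≤ n i → colM i = pad i := by
    intro i hri
    have hcardpad : (pad i).toList.length = n i := by
      simp only [Multiset.length_toList, pad, Multiset.card_add, Sym.card_coe,
        Multiset.card_replicate]
      omega
    have key : ∀ t : Fin (n i), f ((e i).symm t).1 = (pad i).toList.getD t.val z := by
      intro t
      have h2 : (⟨((e i).symm t).1, ((e i).symm t).2⟩ : (P i)) = (e i).symm t := rfl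
      rw [fA i _ ((e i).symm t).2, h2, Equiv.apply_symm_apply]
    calc colM i
        = ((Finset.univ.map (e i).symm.toEmbedding).val).map (fun x : (P i) => f x.1) := by
          rw [Finset.map_univ_equiv]
      _ = (Finset.univ.val.map (e i).symm).map (fun x : (P i) => f x.1) := by
          rw [Finset.map_val]; rfl
      _ = Finset.univ.val.map (fun t : Fin (n i) => f (((e i).symm t).1)) := by
          rw [Multiset.map_map]; rfl
      _ = Finset.univ.val.map (fun t : Fin (n i) => (pad i).toList.getD t.val z) :=
          Multiset.map_congr rfl (fun t _ => key t)
      _ = (List.ofFn (fun t : Fin (n i) => (pad i).toList.getD t.val z) : List (Fin m)) :=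
          Fin.univ_val_map _
      _ = ((pad i).toList : Multiset (Fin m)) := by rw [hlist _ _ hcardpad]
      _ = pad i := Multiset.coe_toList _
  -- `f` distinguishes `G`
  have hdist : Distinguishes G f := by
    intro φ hfφ
    obtain ⟨π, hπ⟩ := hperm φ
    apply hinj φ
    intro i
    by_cases hTr : ∀ ψ : G ≃g G, ⇑ψ '' P i = P i
    · exact hTr φ
    · have hj : ⇑φ '' P i = P (π i) := hπ i
      suffices hij : π i = i by rw [hj, hij]
      have hPij : P i = P (π i) → π i = i := by
        intro hPij
        by_contra hne'
        obtain ⟨v, hv⟩ := hne i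
        exact Set.disjoint_left.mp (hdisj i (π i) (Ne.symm hne')) hv (hPij ▸ hv)
      by_cases hTrj : ∀ ψ : G ≃g G, ⇑ψ '' P (π i) = P (π i)
      · exact hPij ((Set.image_eq_image φ.injective).mp (hj.trans (hTrj φ).symm))
      · -- both parts nontrivial: compare color multisets
        have hri : r ≤ n i := by rw [hr]; exact Nat.sInf_le ⟨i, hTr, rfl⟩
        have hrj : r ≤ n (π i) := by rw [hr]; exact Nat.sInf_le ⟨π i, hTrj, rfl⟩
        have hnij : n (π i) = n i := by
          rw [hn]
          simp only
          rw [← hj, Set.ncard_image_of_injective _ φ.injective]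
        let ψ : (P i) ≃ (P (π i)) :=
          (Equiv.Set.image (⇑φ) (P i) φ.injective).trans (Equiv.setCongr hj)
        have hcol : colM (π i) = colM i := by
          calc colM (π i)
              = ((Finset.univ.map ψ.toEmbedding).val).map (fun x : (P (π i)) => f x.1) := by
                rw [Finset.map_univ_equiv]
            _ = Finset.univ.val.map (fun x : (P i) => f (ψ x).1) := by
                rw [Finset.map_val, Multiset.map_map]; rfl
            _ = colM i := Multiset.map_congr rfl (fun x _ => hfφ x.1)
        have hpad : pad (π i) = pad i := (hB _ hrj).symm.trans (hcol.trans (hB _ hri))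
        have hι : (ι (π i) : Multiset (Fin m)) = (ι i : Multiset (Fin m)) := by
          have := hpad
          simp only [pad, hnij] at this
          exact add_right_cancel this
        exact ι.injective (Sym.coe_injective hι)
  exact Nat.sInf_le ⟨f, hdist⟩
end
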